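/- arXiv:2307.07910 — 6 statements merged into one kernel-verified Lean document; each statement's English description precedes it below -/
import Mathlib

section
/- The set of almost quasi-constant functions ℕ → ℚ̄ is closed under pointwise addition and multiplication; in particular it forms a ℚ̄-subalgebra of all functions ℕ → ℚ̄. -/
open Filter Polynomial

noncomputable abbrev Qbar : Type := AlgebraicClosure ℚ

/-- The absolute logarithmic Weil height of an algebraic number, defined via the
Mahler-measure formula: if `P ∈ ℤ[x]` is the primitive integer multiple of the monic
minimal polynomial of `α` (whose leading coefficient is the lcm `c` of the denominators
of the coefficients of `minpoly ℚ α`), then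
`h(α) = (1 / deg P) * (log c + Σ_{z complex root of P} log⁺ |z|)`. -/
noncomputable def weilHeight (α : Qbar) : ℝ :=
  let P := minpoly ℚ α
  let c : ℕ := (Finset.range (P.natDegree + 1)).lcm fun i => (P.coeff i).den
  (Real.log c + ((P.aroots ℂ).map fun z => Real.log (max 1 ‖z‖)).sum) / P.natDegree

/-- Property (P1): all values of `f` lie in a fixed number field. -/
def PropP1 (f : ℕ → Qbar) : Prop :=
  ∃ K : IntermediateField ℚ Qbar, FiniteDimensional ℚ K ∧ ∀ n, f n ∈ K

/-- Property (P2): the Weil height `h (f n)` grows sublinearly in `n`. -/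
def PropP2 (f : ℕ → Qbar) : Prop :=
  (fun n => weilHeight (f n)) =o[atTop] (fun n : ℕ => (n : ℝ))

/-- Property (P3) (polynomial version): there are moduli `d 1 < d 2 < ⋯`, good sets of
congruence classes `G i ⊆ {0, …, d i - 1}` with `|G i| / d i → 1`, and polynomials
`P i j` such that `f n = P i j (n)` for all sufficiently large `n ≡ j (mod d i)`. -/
def PropP3Poly (f : ℕ → Qbar) : Prop :=
  ∃ d : ℕ → ℕ, StrictMono d ∧ (∀ i, 0 < d i) ∧
    ∃ G : ℕ → Finset ℕ, (∀ i, G i ⊆ Finset.range (d i)) ∧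
      Tendsto (fun i => ((G i).card : ℝ) / (d i : ℝ)) atTop (nhds 1) ∧
      ∃ P : ℕ → ℕ → Polynomial Qbar, ∀ i, ∀ j ∈ G i,
        ∃ N : ℕ, ∀ n ≥ N, n % d i = j → f n = (P i j).eval (n : Qbar)

/-- Property (P3) (constant version). -/
def PropP3Const (f : ℕ → Qbar) : Prop :=
  ∃ d : ℕ → ℕ, StrictMono d ∧ (∀ i, 0 < d i) ∧
    ∃ G : ℕ → Finset ℕ, (∀ i, G i ⊆ Finset.range (d i)) ∧
      Tendsto (fun i => ((G i).card : ℝ) / (d i : ℝ)) atTop (nhds 1) ∧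
      ∃ c : ℕ → ℕ → Qbar, ∀ i, ∀ j ∈ G i,
        ∃ N : ℕ, ∀ n ≥ N, n % d i = j → f n = c i j

/-- An almost quasi-polynomial. -/
def AlmostQuasiPolynomial (f : ℕ → Qbar) : Prop :=
  PropP1 f ∧ PropP2 f ∧ PropP3Poly f

/-- An almost quasi-constant. -/
def AlmostQuasiConstant (f : ℕ → Qbar) : Prop :=
  PropP1 f ∧ PropP2 f ∧ PropP3Const f

/-- A quasi-polynomial. -/
def QuasiPolynomial (f : ℕ → Qbar) : Prop :=
  ∃ d : ℕ, 0 < d ∧ ∃ P : ℕ → Polynomial Qbar, ∃ N : ℕ,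
    ∀ n ≥ N, f n = (P (n % d)).eval (n : Qbar)

/-- A quasi-constant. -/
def QuasiConstant (f : ℕ → Qbar) : Prop :=
  ∃ d : ℕ, 0 < d ∧ ∃ c : ℕ → Qbar, ∃ N : ℕ, ∀ n ≥ N, f n = c (n % d)

open IntermediateField Asymptotics

noncomputable def cden (α : Qbar) : ℕ :=
  (Finset.range ((minpoly ℚ α).natDegree + 1)).lcm fun i => ((minpoly ℚ α).coeff i).den

lemma weilHeight_eq (α : Qbar) : weilHeight α =
    (Real.log (cden α) +
      (((minpoly ℚ α).aroots ℂ).map fun z => Real.log (max 1 ‖z‖)).sum)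
      / (minpoly ℚ α).natDegree := rfl

lemma qbar_int (α : Qbar) : IsIntegral ℚ α :=
  (@Algebra.IsAlgebraic.isAlgebraic ℚ Qbar _ _ _ (AlgebraicClosure.isAlgebraic ℚ) α).isIntegral

lemma minpoly_natDegree_pos (α : Qbar) : 0 < (minpoly ℚ α).natDegree :=
  minpoly.natDegree_pos (qbar_int α)

lemma cden_pos (α : Qbar) : 0 < cden α := by
  rw [Nat.pos_iff_ne_zero]
  intro h
  rw [cden, Finset.lcm_eq_zero_iff] at h
  obtain ⟨i, _, hi⟩ := h
  exact (Rat.den_nz _) hi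

lemma one_le_cden_real (α : Qbar) : (1 : ℝ) ≤ (cden α : ℝ) := by
  exact_mod_cast Nat.one_le_iff_ne_zero.2 (cden_pos α).ne'

lemma logplus_nonneg (z : ℂ) : 0 ≤ Real.log (max 1 ‖z‖) :=
  Real.log_nonneg (le_max_left _ _)

lemma rootsum_nonneg (α : Qbar) :
    0 ≤ (((minpoly ℚ α).aroots ℂ).map fun z => Real.log (max 1 ‖z‖)).sum := by
  apply Multiset.sum_nonneg
  intro x hx
  obtain ⟨z, _, rfl⟩ := Multiset.mem_map.1 hx
  exact logplus_nonneg z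

lemma weilHeight_nonneg (α : Qbar) : 0 ≤ weilHeight α := by
  rw [weilHeight_eq]
  apply div_nonneg _ (Nat.cast_nonneg _)
  have := rootsum_nonneg α
  have h2 : (0:ℝ) ≤ Real.log (cden α) := Real.log_nonneg (one_le_cden_real α)
  linarith

lemma num_eq (α : Qbar) :
    Real.log (cden α) +
      (((minpoly ℚ α).aroots ℂ).map fun z => Real.log (max 1 ‖z‖)).sum
      = (minpoly ℚ α).natDegree * weilHeight α := by
  rw [weilHeight_eq, mul_div_cancel₀]
  exact_mod_cast (minpoly_natDegree_pos α).ne'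

lemma log_cden_le (α : Qbar) :
    Real.log (cden α) ≤ (minpoly ℚ α).natDegree * weilHeight α := by
  rw [← num_eq]
  have := rootsum_nonneg α
  linarith

lemma logplus_root_le {α : Qbar} {z : ℂ} (hz : z ∈ (minpoly ℚ α).aroots ℂ) :
    Real.log (max 1 ‖z‖) ≤ (minpoly ℚ α).natDegree * weilHeight α := by
  rw [← num_eq]
  have h1 : Real.log (max 1 ‖z‖) ≤
      (((minpoly ℚ α).aroots ℂ).map fun z => Real.log (max 1 ‖z‖)).sum := by
    apply Multiset.single_le_sum
    · intro x hx
      obtain ⟨w, _, rfl⟩ := Multiset.mem_map.1 hx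
      exact logplus_nonneg w
    · exact Multiset.mem_map_of_mem _ hz
  have h2 : (0:ℝ) ≤ Real.log (cden α) := Real.log_nonneg (one_le_cden_real α)
  linarith

lemma exists_embedding {γ : Qbar} {z : ℂ} (hz : z ∈ (minpoly ℚ γ).aroots ℂ) :
    ∃ σ : Qbar →+* ℂ, σ γ = z := by
  set φ : ℚ⟮γ⟯ →ₐ[ℚ] ℂ :=
    (IntermediateField.algHomAdjoinIntegralEquiv ℚ (qbar_int γ)).symm ⟨z, hz⟩ with hφ
  letI : Algebra (ℚ⟮γ⟯) ℂ := φ.toRingHom.toAlgebra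
  haveI : NoZeroSMulDivisors (ℚ⟮γ⟯) ℂ :=
    inferInstance
  haveI : Algebra.IsAlgebraic (ℚ⟮γ⟯) Qbar := by
    haveI : Algebra.IsAlgebraic ℚ Qbar := ⟨fun x => (qbar_int x).isAlgebraic⟩; exact Algebra.IsAlgebraic.tower_top (K := ℚ) _
  let σ : Qbar →ₐ[ℚ⟮γ⟯] ℂ := IsAlgClosed.lift
  refine ⟨σ.toRingHom, ?_⟩
  have h2 := σ.commutes (IntermediateField.AdjoinSimple.gen ℚ γ)
  rw [IntermediateField.AdjoinSimple.algebraMap_gen] at h2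
  show σ γ = z
  rw [h2]
  show φ (IntermediateField.AdjoinSimple.gen ℚ γ) = z
  exact IntermediateField.algHomAdjoinIntegralEquiv_symm_apply_gen ℚ (qbar_int γ) ⟨z, hz⟩

lemma ringHom_mem_aroots (σ : Qbar →+* ℂ) (α : Qbar) :
    σ α ∈ (minpoly ℚ α).aroots ℂ := by
  rw [Polynomial.mem_aroots]
  refine ⟨minpoly.ne_zero (qbar_int α), ?_⟩
  have h1 : (algebraMap ℚ ℂ) = σ.comp (algebraMap ℚ Qbar) := Subsingleton.elim _ _
  rw [aeval_def, h1, ← Polynomial.hom_eval₂, ← aeval_def, minpoly.aeval, map_zero]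

lemma den_mul_self_int (q : ℚ) : (q.den : ℚ) * q = (q.num : ℚ) := by
  rw [mul_comm, ← eq_div_iff (by exact_mod_cast q.den_nz : ((q.den : ℚ)) ≠ 0)]
  exact (Rat.num_div_den q).symm

lemma den_dvd_of_mul_int {q : ℚ} {m : ℕ} (z : ℤ) (h : (m:ℚ) * q = (z:ℚ)) : q.den ∣ m := by
  have h1 : (z : ℚ) * (q.den : ℚ) = (m : ℚ) * (q.num : ℚ) := by
    calc (z:ℚ) * q.den = ((m:ℚ) * q) * q.den := by rw [h]
      _ = (m:ℚ) * ((q.den:ℚ) * q) := by ring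
      _ = (m:ℚ) * (q.num:ℚ) := by rw [den_mul_self_int]
  have h2 : z * (q.den : ℤ) = (m : ℤ) * q.num := by exact_mod_cast h1
  have h3 : (q.den : ℤ) ∣ (m : ℤ) * q.num := ⟨z, by linarith⟩
  have h4 : q.den ∣ m * q.num.natAbs := by
    have h5 := Int.natAbs_dvd_natAbs.2 h3
    simpa [Int.natAbs_mul] using h5
  exact Nat.Coprime.dvd_of_dvd_mul_right q.reduced.symm h4

lemma cden_mul_coeff_isInt (α : Qbar) (i : ℕ) :
    ∃ z : ℤ, ((cden α : ℚ)) * (minpoly ℚ α).coeff i = (z : ℚ) := by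
  by_cases hi : i ≤ (minpoly ℚ α).natDegree
  · have hdvd : ((minpoly ℚ α).coeff i).den ∣ cden α := by
      apply Finset.dvd_lcm
      simpa using Nat.lt_succ_of_le hi
    obtain ⟨t, ht⟩ := hdvd
    refine ⟨(t : ℤ) * ((minpoly ℚ α).coeff i).num, ?_⟩
    push_cast
    rw [ht]
    push_cast
    rw [mul_comm (((minpoly ℚ α).coeff i).den : ℚ) (t:ℚ), mul_assoc, den_mul_self_int]
  · rw [Polynomial.coeff_eq_zero_of_natDegree_lt (lt_of_not_ge hi)]
    exact ⟨0, by simp⟩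

lemma isIntegral_cden_mul (α : Qbar) : IsIntegral ℤ ((cden α : Qbar) * α) := by
  set c : ℕ := cden α with hc
  have hlift : (c : ℚ) • (minpoly ℚ α) ∈ Polynomial.lifts (algebraMap ℤ ℚ) := by
    rw [Polynomial.lifts_iff_coeff_lifts]
    intro n
    obtain ⟨z, hz⟩ := cden_mul_coeff_isInt α n
    exact ⟨z, by simpa [Polynomial.coeff_smul, smul_eq_mul] using hz.symm⟩
  obtain ⟨Q, hQ⟩ := hlift
  simp only [Polynomial.coe_mapRingHom] at hQ
  have hQ0 : Polynomial.aeval α Q = 0 := by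
    have h1 : Polynomial.aeval α (Q.map (algebraMap ℤ ℚ)) = Polynomial.aeval (R := ℤ) α Q := by
      rw [Polynomial.aeval_map_algebraMap]
    rw [← h1, hQ]
    simp [minpoly.aeval]
  have hlc : Q.leadingCoeff = (c : ℤ) := by
    have hinj : Function.Injective (algebraMap ℤ ℚ) := fun a b h => by exact_mod_cast h
    have h2 : (Q.map (algebraMap ℤ ℚ)).leadingCoeff = algebraMap ℤ ℚ Q.leadingCoeff :=
      Polynomial.leadingCoeff_map_of_injective hinj Q
    rw [hQ] at h2
    have h3 : ((c : ℚ) • (minpoly ℚ α)).leadingCoeff = (c : ℚ) := by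
      rw [Polynomial.smul_eq_C_mul, Polynomial.leadingCoeff_mul, Polynomial.leadingCoeff_C,
        (minpoly.monic (qbar_int α)).leadingCoeff, mul_one]
    rw [h3] at h2
    simp only [eq_intCast] at h2
    exact_mod_cast h2.symm
  have := isIntegral_leadingCoeff_smul (R := ℤ) (x := α) (p := Q) hQ0
  rw [hlc] at this
  convert this using 1
  · rfl
  rw [zsmul_eq_mul]
  push_cast
  ring

lemma minpoly_mul_rat_natDegree_le (γ : Qbar) (m : ℚ) :
    (minpoly ℚ ((algebraMap ℚ Qbar m) * γ)).natDegree ≤ (minpoly ℚ γ).natDegree := by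
  have h0 : Polynomial.aeval ((algebraMap ℚ Qbar m) * γ) ((minpoly ℚ γ).scaleRoots m) = 0 :=
    Polynomial.scaleRoots_aeval_eq_zero (minpoly.aeval ℚ γ)
  have hne : ((minpoly ℚ γ).scaleRoots m) ≠ 0 := by
    intro h
    have := Polynomial.coeff_scaleRoots_natDegree (minpoly ℚ γ) m
    rw [h] at this
    simp [(minpoly.monic (qbar_int γ)).leadingCoeff] at this
  calc (minpoly ℚ ((algebraMap ℚ Qbar m) * γ)).natDegree
      ≤ ((minpoly ℚ γ).scaleRoots m).natDegree :=
        Polynomial.natDegree_le_of_dvd (minpoly.dvd ℚ _ h0) hne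
    _ = (minpoly ℚ γ).natDegree := Polynomial.natDegree_scaleRoots _ _

lemma minpoly_mul_rat (γ : Qbar) {m : ℚ} (hm : m ≠ 0) :
    minpoly ℚ ((algebraMap ℚ Qbar m) * γ) = (minpoly ℚ γ).scaleRoots m := by
  have h0 : Polynomial.aeval ((algebraMap ℚ Qbar m) * γ) ((minpoly ℚ γ).scaleRoots m) = 0 :=
    Polynomial.scaleRoots_aeval_eq_zero (minpoly.aeval ℚ γ)
  have hmono : ((minpoly ℚ γ).scaleRoots m).Monic :=
    (Polynomial.monic_scaleRoots_iff m).2 (minpoly.monic (qbar_int γ))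
  have hdvd : minpoly ℚ ((algebraMap ℚ Qbar m) * γ) ∣ (minpoly ℚ γ).scaleRoots m :=
    minpoly.dvd ℚ _ h0
  have hback : (minpoly ℚ γ).natDegree ≤ (minpoly ℚ ((algebraMap ℚ Qbar m) * γ)).natDegree := by
    have := minpoly_mul_rat_natDegree_le ((algebraMap ℚ Qbar m) * γ) m⁻¹
    have heq : (algebraMap ℚ Qbar m⁻¹) * ((algebraMap ℚ Qbar m) * γ) = γ := by
      rw [← mul_assoc, ← map_mul, inv_mul_cancel₀ hm, map_one, one_mul]
    rwa [heq] at this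
  have hdeg : ((minpoly ℚ γ).scaleRoots m).natDegree ≤
      (minpoly ℚ ((algebraMap ℚ Qbar m) * γ)).natDegree := by
    rw [Polynomial.natDegree_scaleRoots]; exact hback
  exact (Polynomial.eq_of_monic_of_dvd_of_natDegree_le
    (minpoly.monic (qbar_int _)) hmono hdvd hdeg).symm

lemma cden_dvd_pow {γ : Qbar} (m : ℕ) (hm : m ≠ 0) (h : IsIntegral ℤ ((m:Qbar) * γ)) :
    cden γ ∣ m ^ (minpoly ℚ γ).natDegree := by
  set P := minpoly ℚ γ with hP
  have hmQ : ((m:ℚ)) ≠ 0 := Nat.cast_ne_zero.2 hm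
  have hcast : ((m : Qbar)) = algebraMap ℚ Qbar ((m : ℚ)) := by
    rw [map_natCast]
  have hmp : minpoly ℚ ((m:Qbar) * γ) = P.scaleRoots (m:ℚ) := by
    rw [hcast]; exact minpoly_mul_rat γ hmQ
  -- integer coefficients of minpoly of m*γ
  have hint : ∀ i, ∃ z : ℤ, (minpoly ℚ ((m:Qbar) * γ)).coeff i = (z : ℚ) := by
    intro i
    have := minpoly.isIntegrallyClosed_eq_field_fractions' ℚ (S := Qbar) h
    rw [this, Polynomial.coeff_map]
    exact ⟨(minpoly ℤ ((m:Qbar) * γ)).coeff i, by simp [eq_intCast]⟩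
  apply Finset.lcm_dvd
  intro i hi
  rw [Finset.mem_range, Nat.lt_succ_iff] at hi
  obtain ⟨z, hz⟩ := hint i
  rw [hmp, Polynomial.coeff_scaleRoots] at hz
  have hdvd1 : (P.coeff i).den ∣ m ^ (P.natDegree - i) := by
    apply den_dvd_of_mul_int z
    rw [← hz]
    push_cast
    ring
  exact hdvd1.trans (pow_dvd_pow m (Nat.sub_le _ _))

lemma one_le_max_one (x : ℝ) : (1:ℝ) ≤ max 1 x := le_max_left _ _
lemma max_one_pos (x : ℝ) : (0:ℝ) < max 1 x := lt_of_lt_of_le one_pos (le_max_left _ _)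

lemma logplus_add_le (x y : ℂ) :
    Real.log (max 1 ‖x + y‖) ≤ Real.log 2 + Real.log (max 1 ‖x‖) + Real.log (max 1 ‖y‖) := by
  have h1 : max 1 ‖x + y‖ ≤ 2 * (max 1 ‖x‖ * max 1 ‖y‖) := by
    rcases max_cases 1 ‖x+y‖ with ⟨h, _⟩ | ⟨h, _⟩ <;> rw [h]
    · nlinarith [one_le_max_one ‖x‖, one_le_max_one ‖y‖]
    · have h2 : ‖x + y‖ ≤ ‖x‖ + ‖y‖ := norm_add_le x y
      have h3 : ‖x‖ ≤ max 1 ‖x‖ := le_max_right _ _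
      have h4 : ‖y‖ ≤ max 1 ‖y‖ := le_max_right _ _
      nlinarith [one_le_max_one ‖x‖, one_le_max_one ‖y‖]
  calc Real.log (max 1 ‖x + y‖) ≤ Real.log (2 * (max 1 ‖x‖ * max 1 ‖y‖)) :=
        Real.log_le_log (max_one_pos _) h1
    _ = Real.log 2 + Real.log (max 1 ‖x‖) + Real.log (max 1 ‖y‖) := by
        rw [Real.log_mul (by norm_num) (by positivity), Real.log_mul (by positivity) (by positivity)]
        ring

lemma logplus_mul_le (x y : ℂ) :
    Real.log (max 1 ‖x * y‖) ≤ Real.log (max 1 ‖x‖) + Real.log (max 1 ‖y‖) := by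
  have h1 : max 1 ‖x * y‖ ≤ max 1 ‖x‖ * max 1 ‖y‖ := by
    rcases max_cases 1 ‖x*y‖ with ⟨h, _⟩ | ⟨h, _⟩ <;> rw [h]
    · nlinarith [one_le_max_one ‖x‖, one_le_max_one ‖y‖]
    · rw [norm_mul]
      have h3 : ‖x‖ ≤ max 1 ‖x‖ := le_max_right _ _
      have h4 : ‖y‖ ≤ max 1 ‖y‖ := le_max_right _ _
      nlinarith [one_le_max_one ‖x‖, one_le_max_one ‖y‖, norm_nonneg x, norm_nonneg y]
  calc Real.log (max 1 ‖x * y‖) ≤ Real.log (max 1 ‖x‖ * max 1 ‖y‖) :=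
        Real.log_le_log (max_one_pos _) h1
    _ = _ := Real.log_mul (by positivity) (by positivity)

lemma weilHeight_le_of (γ : Qbar) (m : ℕ) (hm : m ≠ 0)
    (hint : IsIntegral ℤ ((m:Qbar) * γ)) (B : ℝ) (hB : 0 ≤ B)
    (hroots : ∀ z ∈ (minpoly ℚ γ).aroots ℂ, Real.log (max 1 ‖z‖) ≤ B) :
    weilHeight γ ≤ Real.log m + B := by
  set d : ℕ := (minpoly ℚ γ).natDegree with hd
  have hdpos : 0 < d := minpoly_natDegree_pos γ
  have hlog : Real.log (cden γ) ≤ d * Real.log m := by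
    have h1 : cden γ ≤ m ^ d := Nat.le_of_dvd (pow_pos (Nat.pos_of_ne_zero hm) d)
      (cden_dvd_pow m hm hint)
    calc Real.log (cden γ) ≤ Real.log ((m:ℝ) ^ d) := by
          apply Real.log_le_log (by exact_mod_cast cden_pos γ)
          exact_mod_cast h1
      _ = d * Real.log m := by rw [Real.log_pow]
  have hsum : (((minpoly ℚ γ).aroots ℂ).map fun z => Real.log (max 1 ‖z‖)).sum ≤ d * B := by
    have hcard : Multiset.card (((minpoly ℚ γ).aroots ℂ).map fun z => Real.log (max 1 ‖z‖)) ≤ d := by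
      rw [Multiset.card_map]
      calc Multiset.card ((minpoly ℚ γ).aroots ℂ)
          ≤ ((minpoly ℚ γ).map (algebraMap ℚ ℂ)).natDegree := Polynomial.card_roots' _
        _ = d := Polynomial.natDegree_map _
    have h2 : (((minpoly ℚ γ).aroots ℂ).map fun z => Real.log (max 1 ‖z‖)).sum ≤
        (Multiset.card (((minpoly ℚ γ).aroots ℂ).map fun z => Real.log (max 1 ‖z‖))) • B := by
      apply Multiset.sum_le_card_nsmul
      intro x hx
      obtain ⟨w, hw, rfl⟩ := Multiset.mem_map.1 hx
      exact hroots w hw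
    calc _ ≤ _ := h2
      _ ≤ d • B := by
          apply smul_le_smul_of_nonneg_right _ hB
          exact_mod_cast hcard
      _ = d * B := by rw [nsmul_eq_mul]
  rw [weilHeight_eq, div_le_iff₀ (by exact_mod_cast hdpos)]
  calc Real.log (cden γ) + _ ≤ d * Real.log m + d * B := add_le_add hlog hsum
    _ = (Real.log m + B) * d := by ring

lemma isIntegral_natCast_mul {x : Qbar} (n : ℕ) (hx : IsIntegral ℤ x) :
    IsIntegral ℤ ((n:Qbar) * x) := by
  have h1 : IsIntegral ℤ (((n:ℤ) : Qbar)) := by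
    have := isIntegral_algebraMap (R := ℤ) (A := Qbar) (x := (n:ℤ))
    simpa [eq_intCast] using this
  have h2 : ((n:ℤ) : Qbar) = (n : Qbar) := by push_cast; ring
  rw [h2] at h1
  exact h1.mul hx

lemma weilHeight_add_le (α β : Qbar) :
    weilHeight (α + β) ≤ Real.log 2 +
      2 * (((minpoly ℚ α).natDegree : ℝ) * weilHeight α) +
      2 * (((minpoly ℚ β).natDegree : ℝ) * weilHeight β) := by
  set A : ℝ := ((minpoly ℚ α).natDegree : ℝ) * weilHeight α with hA
  set B : ℝ := ((minpoly ℚ β).natDegree : ℝ) * weilHeight β with hB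
  have hA0 : 0 ≤ A := mul_nonneg (Nat.cast_nonneg _) (weilHeight_nonneg α)
  have hB0 : 0 ≤ B := mul_nonneg (Nat.cast_nonneg _) (weilHeight_nonneg β)
  have hm : cden α * cden β ≠ 0 := by
    have := cden_pos α; have := cden_pos β; positivity
  have hint : IsIntegral ℤ (((cden α * cden β : ℕ):Qbar) * (α+β)) := by
    have h1 := isIntegral_natCast_mul (cden β) (isIntegral_cden_mul α)
    have h2 := isIntegral_natCast_mul (cden α) (isIntegral_cden_mul β)
    have h3 := h1.add h2
    convert h3 using 1
    · rfl
    push_cast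
    ring
  have hroots : ∀ z ∈ (minpoly ℚ (α + β)).aroots ℂ,
      Real.log (max 1 ‖z‖) ≤ Real.log 2 + A + B := by
    intro z hz
    obtain ⟨σ, hσ⟩ := exists_embedding hz
    have hzz : z = σ α + σ β := by rw [← hσ, map_add]
    rw [hzz]
    calc Real.log (max 1 ‖σ α + σ β‖)
        ≤ Real.log 2 + Real.log (max 1 ‖σ α‖) + Real.log (max 1 ‖σ β‖) := logplus_add_le _ _
      _ ≤ Real.log 2 + A + B := by
          have := logplus_root_le (ringHom_mem_aroots σ α)
          have := logplus_root_le (ringHom_mem_aroots σ β)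
          linarith
  have hb := weilHeight_le_of (α + β) (cden α * cden β) hm hint (Real.log 2 + A + B)
    (by have := Real.log_nonneg (by norm_num : (1:ℝ) ≤ 2); linarith) hroots
  have hlogm : Real.log ((cden α * cden β : ℕ):ℝ) ≤ A + B := by
    push_cast
    rw [Real.log_mul (by exact_mod_cast (cden_pos α).ne') (by exact_mod_cast (cden_pos β).ne')]
    exact add_le_add (log_cden_le α) (log_cden_le β)
  linarith

lemma weilHeight_mul_le (α β : Qbar) :
    weilHeight (α * β) ≤ Real.log 2 +
      2 * (((minpoly ℚ α).natDegree : ℝ) * weilHeight α) +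
      2 * (((minpoly ℚ β).natDegree : ℝ) * weilHeight β) := by
  set A : ℝ := ((minpoly ℚ α).natDegree : ℝ) * weilHeight α with hA
  set B : ℝ := ((minpoly ℚ β).natDegree : ℝ) * weilHeight β with hB
  have hA0 : 0 ≤ A := mul_nonneg (Nat.cast_nonneg _) (weilHeight_nonneg α)
  have hB0 : 0 ≤ B := mul_nonneg (Nat.cast_nonneg _) (weilHeight_nonneg β)
  have hm : cden α * cden β ≠ 0 := by
    have := cden_pos α; have := cden_pos β; positivity
  have hint : IsIntegral ℤ (((cden α * cden β : ℕ):Qbar) * (α*β)) := by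
    have h3 := (isIntegral_cden_mul α).mul (isIntegral_cden_mul β)
    convert h3 using 1
    · rfl
    push_cast
    ring
  have hroots : ∀ z ∈ (minpoly ℚ (α * β)).aroots ℂ,
      Real.log (max 1 ‖z‖) ≤ Real.log 2 + A + B := by
    intro z hz
    obtain ⟨σ, hσ⟩ := exists_embedding hz
    have hzz : z = σ α * σ β := by rw [← hσ, map_mul]
    rw [hzz]
    have hlog2 : (0:ℝ) ≤ Real.log 2 := Real.log_nonneg (by norm_num)
    calc Real.log (max 1 ‖σ α * σ β‖)
        ≤ Real.log (max 1 ‖σ α‖) + Real.log (max 1 ‖σ β‖) := logplus_mul_le _ _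
      _ ≤ Real.log 2 + A + B := by
          have := logplus_root_le (ringHom_mem_aroots σ α)
          have := logplus_root_le (ringHom_mem_aroots σ β)
          linarith
  have hb := weilHeight_le_of (α * β) (cden α * cden β) hm hint (Real.log 2 + A + B)
    (by have := Real.log_nonneg (by norm_num : (1:ℝ) ≤ 2); linarith) hroots
  have hlogm : Real.log ((cden α * cden β : ℕ):ℝ) ≤ A + B := by
    push_cast
    rw [Real.log_mul (by exact_mod_cast (cden_pos α).ne') (by exact_mod_cast (cden_pos β).ne')]
    exact add_le_add (log_cden_le α) (log_cden_le β)
  linarith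

lemma natDegree_le_of_mem {K : IntermediateField ℚ Qbar} (hK : FiniteDimensional ℚ K)
    {α : Qbar} (h : α ∈ K) :
    (minpoly ℚ α).natDegree ≤ Module.finrank ℚ K := by
  have h1 : minpoly ℚ α = minpoly ℚ (⟨α, h⟩ : K) := by
    have := minpoly.algebraMap_eq (A := ℚ) (B := K) (B' := Qbar) (algebraMap K Qbar).injective (⟨α, h⟩ : K)
    rw [← this]
    rfl
  rw [h1]
  exact minpoly.natDegree_le _

lemma tendsto_norm_natCast : Tendsto (fun n : ℕ => ‖(n : ℝ)‖) atTop atTop := by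
  have h : ∀ n : ℕ, ‖(n:ℝ)‖ = (n:ℝ) := fun n => by
    rw [Real.norm_eq_abs, abs_of_nonneg (Nat.cast_nonneg n)]
  simp only [h]
  exact tendsto_natCast_atTop_atTop

lemma isLittleO_const_nat (c : ℝ) :
    (fun _ : ℕ => c) =o[atTop] (fun n : ℕ => (n : ℝ)) :=
  isLittleO_const_left.2 (Or.inr tendsto_norm_natCast)

lemma propP2_of_bound {s f g : ℕ → Qbar} (C1 C2 : ℝ)
    (hbound : ∀ n, weilHeight (s n) ≤
      Real.log 2 + C1 * weilHeight (f n) + C2 * weilHeight (g n))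
    (h2f : PropP2 f) (h2g : PropP2 g) : PropP2 s := by
  have hb : (fun n => Real.log 2 + C1 * weilHeight (f n) + C2 * weilHeight (g n))
      =o[atTop] (fun n : ℕ => (n : ℝ)) :=
    ((isLittleO_const_nat (Real.log 2)).add (h2f.const_mul_left C1)).add
      (h2g.const_mul_left C2)
  have hO : (fun n => weilHeight (s n)) =O[atTop]
      (fun n => Real.log 2 + C1 * weilHeight (f n) + C2 * weilHeight (g n)) := by
    apply isBigO_of_le
    intro n
    rw [Real.norm_eq_abs, Real.norm_eq_abs, abs_of_nonneg (weilHeight_nonneg _)]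
    exact (hbound n).trans (le_abs_self _)
  exact hO.trans_isLittleO hb

-- counting: number of j < d*e with j % d ∈ S equals |S| * e
lemma card_filter_mod {d : ℕ} (e : ℕ) (S : Finset ℕ) (hS : S ⊆ Finset.range d) :
    ((Finset.range (d * e)).filter (fun j => j % d ∈ S)).card = S.card * e := by
  rcases Nat.eq_zero_or_pos d with rfl | hd
  · simp
    have : S = ∅ := Finset.subset_empty.1 (by simpa using hS)
    simp [this]
  have key : ((Finset.range (d * e)).filter (fun j => j % d ∈ S)).card
      = (S ×ˢ Finset.range e).card := by
    apply Finset.card_bij (fun j _ => (j % d, j / d))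
    · rintro j hj
      rw [Finset.mem_filter, Finset.mem_range] at hj
      rw [Finset.mem_product]
      refine ⟨hj.2, ?_⟩
      rw [Finset.mem_range]
      exact Nat.div_lt_of_lt_mul hj.1
    · intro a ha b hb hab
      have h0 : (a % d, a / d) = (b % d, b / d) := hab
      rw [Prod.mk.injEq] at h0
      obtain ⟨h1, h2⟩ := h0
      have ha2 := Nat.div_add_mod a d
      have hb2 := Nat.div_add_mod b d
      rw [h1, h2] at ha2
      exact ha2.symm.trans hb2
    · rintro ⟨r, q⟩ hrq
      rw [Finset.mem_product, Finset.mem_range] at hrq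
      obtain ⟨hr, hq⟩ := hrq
      have hrd : r < d := Finset.mem_range.1 (hS hr)
      refine ⟨q * d + r, ?_, ?_⟩
      · rw [Finset.mem_filter, Finset.mem_range]
        constructor
        · calc q * d + r < q * d + d := by omega
            _ = (q + 1) * d := by ring
            _ ≤ e * d := Nat.mul_le_mul_right d hq
            _ = d * e := mul_comm _ _
        · have hmod : (q * d + r) % d = r := by
            rw [mul_comm q d, Nat.mul_add_mod, Nat.mod_eq_of_lt hrd]
          rw [hmod]
          exact hr
      · have h1 : (q * d + r) % d = r := by
          rw [mul_comm q d, Nat.mul_add_mod, Nat.mod_eq_of_lt hrd]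
        have h2 : (q * d + r) / d = q := by
          rw [add_comm, Nat.add_mul_div_right _ _ hd, Nat.div_eq_of_lt hrd, zero_add]
        show (_ % d, _ / d) = (r, q)
        rw [h1, h2]

  rw [key, Finset.card_product, Finset.card_range]

lemma propP3_op (op : Qbar → Qbar → Qbar) {f g : ℕ → Qbar}
    (hf : PropP3Const f) (hg : PropP3Const g) :
    PropP3Const (fun n => op (f n) (g n)) := by
  obtain ⟨d, hdm, hdp, G, hGsub, hGlim, c, hc⟩ := hf
  obtain ⟨e, hem, hep, H, hHsub, hHlim, b, hb⟩ := hg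
  refine ⟨fun i => d i * e i,
    fun i j hij => mul_lt_mul'' (hdm hij) (hem hij) (Nat.zero_le _) (Nat.zero_le _),
    fun i => mul_pos (hdp i) (hep i),
    fun i => (Finset.range (d i * e i)).filter
      (fun j => j % d i ∈ G i ∧ j % e i ∈ H i),
    fun i => Finset.filter_subset _ _, ?_,
    fun i j => op (c i (j % d i)) (b i (j % e i)), ?_⟩
  · -- density
    have key : ∀ i, (d i * e i : ℕ) ≤
        ((Finset.range (d i * e i)).filter
          (fun j => j % d i ∈ G i ∧ j % e i ∈ H i)).card
        + (d i - (G i).card) * e i + (e i - (H i).card) * d i := by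
      intro i
      have hbad1 : ((Finset.range (d i * e i)).filter (fun j => j % d i ∉ G i)).card
          = (d i - (G i).card) * e i := by
        have h1 : ((Finset.range (d i * e i)).filter (fun j => j % d i ∉ G i))
            = ((Finset.range (d i * e i)).filter
                (fun j => j % d i ∈ Finset.range (d i) \ G i)) := by
          apply Finset.filter_congr
          intro x _
          simp only [Finset.mem_sdiff, Finset.mem_range]
          constructor
          · intro h; exact ⟨Nat.mod_lt x (hdp i), h⟩
          · tauto
        rw [h1, card_filter_mod _ _ Finset.sdiff_subset,
          Finset.card_sdiff_of_subset (hGsub i), Finset.card_range]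
      have hbad2 : ((Finset.range (d i * e i)).filter (fun j => j % e i ∉ H i)).card
          = (e i - (H i).card) * d i := by
        have h1 : ((Finset.range (d i * e i)).filter (fun j => j % e i ∉ H i))
            = ((Finset.range (e i * d i)).filter
                (fun j => j % e i ∈ Finset.range (e i) \ H i)) := by
          rw [mul_comm (e i) (d i)]
          apply Finset.filter_congr
          intro x _
          simp only [Finset.mem_sdiff, Finset.mem_range]
          constructor
          · intro h; exact ⟨Nat.mod_lt x (hep i), h⟩
          · tauto
        rw [h1, card_filter_mod _ _ Finset.sdiff_subset,
          Finset.card_sdiff_of_subset (hHsub i), Finset.card_range]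
      have hsub : Finset.range (d i * e i) ⊆
          ((Finset.range (d i * e i)).filter
            (fun j => j % d i ∈ G i ∧ j % e i ∈ H i))
          ∪ ((Finset.range (d i * e i)).filter (fun j => j % d i ∉ G i))
          ∪ ((Finset.range (d i * e i)).filter (fun j => j % e i ∉ H i)) := by
        intro x hx
        simp only [Finset.mem_union, Finset.mem_filter]
        by_cases h1 : x % d i ∈ G i
        · by_cases h2 : x % e i ∈ H i
          · exact Or.inl (Or.inl ⟨hx, h1, h2⟩)
          · exact Or.inr ⟨hx, h2⟩
        · exact Or.inl (Or.inr ⟨hx, h1⟩)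
      calc d i * e i = (Finset.range (d i * e i)).card := (Finset.card_range _).symm
        _ ≤ _ := Finset.card_le_card hsub
        _ ≤ ((Finset.range (d i * e i)).filter
              (fun j => j % d i ∈ G i ∧ j % e i ∈ H i)).card
            + ((Finset.range (d i * e i)).filter (fun j => j % d i ∉ G i)).card
            + ((Finset.range (d i * e i)).filter (fun j => j % e i ∉ H i)).card :=
            (Finset.card_union_le _ _).trans
              (add_le_add_left (Finset.card_union_le _ _) _)
        _ = _ := by rw [hbad1, hbad2]
    apply tendsto_of_tendsto_of_tendsto_of_le_of_le
      (g := fun i => ((G i).card : ℝ) / d i + ((H i).card : ℝ) / e i - 1)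
      (h := fun _ => (1:ℝ))
    · have : Tendsto (fun i => ((G i).card : ℝ) / d i + ((H i).card : ℝ) / e i)
          atTop (nhds (1 + 1)) := hGlim.add hHlim
      have h2 := this.sub_const 1
      norm_num at h2
      exact h2
    · exact tendsto_const_nhds
    · intro i
      have hdr : (0:ℝ) < d i := by exact_mod_cast hdp i
      have her : (0:ℝ) < e i := by exact_mod_cast hep i
      have hDE : (0:ℝ) < ((d i * e i : ℕ) : ℝ) := by
        exact_mod_cast mul_pos (hdp i) (hep i)
      rw [le_div_iff₀ hDE]
      have hgle : (G i).card ≤ d i := by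
        simpa using Finset.card_le_card (hGsub i)
      have hhle : (H i).card ≤ e i := by
        simpa using Finset.card_le_card (hHsub i)
      have h1 : ((d i * e i : ℕ):ℝ) ≤
          ((((Finset.range (d i * e i)).filter
            (fun j => j % d i ∈ G i ∧ j % e i ∈ H i)).card
            + (d i - (G i).card) * e i + (e i - (H i).card) * d i : ℕ):ℝ) :=
        Nat.cast_le.2 (key i)
      push_cast [Nat.cast_sub hgle, Nat.cast_sub hhle] at h1
      push_cast
      have hexp : (((G i).card : ℝ) / d i + ((H i).card : ℝ) / e i - 1) * ((d i : ℝ) * e i)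
          = ((G i).card : ℝ) * e i + ((H i).card : ℝ) * d i - (d i : ℝ) * e i := by
        field_simp
      rw [hexp]
      nlinarith [h1]
    · intro i
      apply div_le_one_of_le₀
      · have h1 : ((Finset.range (d i * e i)).filter
            (fun j => j % d i ∈ G i ∧ j % e i ∈ H i)).card ≤ d i * e i := by
          exact le_trans (Finset.card_le_card (Finset.filter_subset _ _))
            (le_of_eq (Finset.card_range _))
        exact Nat.cast_le.2 h1
      · positivity
  · -- constants
    intro i j hj
    rw [Finset.mem_filter] at hj
    obtain ⟨hjr, hj1, hj2⟩ := hj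
    obtain ⟨N1, hN1⟩ := hc i _ hj1
    obtain ⟨N2, hN2⟩ := hb i _ hj2
    refine ⟨max N1 N2, fun n hn hmod => ?_⟩
    have hd : n % d i = j % d i := by
      rw [← Nat.mod_mod_of_dvd n (dvd_mul_right (d i) (e i)), hmod]
    have he : n % e i = j % e i := by
      rw [← Nat.mod_mod_of_dvd n (dvd_mul_left (e i) (d i)), hmod]
    show op (f n) (g n) = op (c i (j % d i)) (b i (j % e i))
    rw [hN1 n (le_of_max_le_left hn) hd, hN2 n (le_of_max_le_right hn) he]


open IntermediateField Asymptotics in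
lemma aqc_op (op : Qbar → Qbar → Qbar)
    (hopmem : ∀ {M : IntermediateField ℚ Qbar} {x y : Qbar}, x ∈ M → y ∈ M → op x y ∈ M)
    (hopht : ∀ α β : Qbar, weilHeight (op α β) ≤ Real.log 2 +
      2 * (((minpoly ℚ α).natDegree : ℝ) * weilHeight α) +
      2 * (((minpoly ℚ β).natDegree : ℝ) * weilHeight β))
    {f g : ℕ → Qbar} (hf : AlmostQuasiConstant f) (hg : AlmostQuasiConstant g) :
    AlmostQuasiConstant (fun n => op (f n) (g n)) := by
  obtain ⟨⟨K, hK, hfK⟩, h2f, h3f⟩ := hf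
  obtain ⟨⟨L, hL, hgL⟩, h2g, h3g⟩ := hg
  haveI := hK; haveI := hL
  refine ⟨⟨K ⊔ L, IntermediateField.finiteDimensional_sup K L, fun n =>
      hopmem ((le_sup_left : K ≤ K ⊔ L) (hfK n)) ((le_sup_right : L ≤ K ⊔ L) (hgL n))⟩,
    ?_, propP3_op op h3f h3g⟩
  apply propP2_of_bound (2 * (Module.finrank ℚ K : ℝ)) (2 * (Module.finrank ℚ L : ℝ)) ?_ h2f h2g
  intro n
  have hb := hopht (f n) (g n)
  have hdf : ((minpoly ℚ (f n)).natDegree : ℝ) ≤ (Module.finrank ℚ K : ℝ) := by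
    exact_mod_cast natDegree_le_of_mem hK (hfK n)
  have hdg : ((minpoly ℚ (g n)).natDegree : ℝ) ≤ (Module.finrank ℚ L : ℝ) := by
    exact_mod_cast natDegree_le_of_mem hL (hgL n)
  have h1 : ((minpoly ℚ (f n)).natDegree : ℝ) * weilHeight (f n) ≤
      (Module.finrank ℚ K : ℝ) * weilHeight (f n) :=
    mul_le_mul_of_nonneg_right hdf (weilHeight_nonneg _)
  have h2 : ((minpoly ℚ (g n)).natDegree : ℝ) * weilHeight (g n) ≤
      (Module.finrank ℚ L : ℝ) * weilHeight (g n) :=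
    mul_le_mul_of_nonneg_right hdg (weilHeight_nonneg _)
  show weilHeight (op (f n) (g n)) ≤ _
  linarith

open IntermediateField in
lemma aqc_const (a : Qbar) : AlmostQuasiConstant (fun _ => a) := by
  refine ⟨⟨ℚ⟮a⟯, IntermediateField.adjoin.finiteDimensional (qbar_int a),
    fun _ => IntermediateField.mem_adjoin_simple_self ℚ a⟩, ?_, ?_⟩
  · exact isLittleO_const_nat _
  · refine ⟨fun i => i + 1, fun i j h => Nat.succ_lt_succ h, fun i => Nat.succ_pos i,
      fun i => Finset.range (i + 1), fun i => subset_rfl, ?_, fun _ _ => a,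
      fun i j _ => ⟨0, fun n _ _ => rfl⟩⟩
    have h0 : ∀ i : ℕ, ((Finset.range (i + 1)).card : ℝ) / ((i + 1 : ℕ) : ℝ) = 1 := by
      intro i
      rw [Finset.card_range]
      apply div_self
      positivity
    exact Tendsto.congr (fun i => (h0 i).symm) tendsto_const_nhds

/-- almost quasi-constants are closed under pointwise addition and
multiplication; together with containing all constants, they form a
`ℚ̄`-subalgebra of the functions `ℕ → ℚ̄`. -/
theorem almostQuasiConstant_closed_add_mul :
    (∀ f g : ℕ → Qbar, AlmostQuasiConstant f → AlmostQuasiConstant g →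
      AlmostQuasiConstant (f + g)) ∧
    (∀ f g : ℕ → Qbar, AlmostQuasiConstant f → AlmostQuasiConstant g →
      AlmostQuasiConstant (f * g)) ∧
    (∀ a : Qbar, AlmostQuasiConstant (fun _ => a)) := by
  refine ⟨fun f g hf hg => aqc_op (· + ·) (fun h1 h2 => add_mem h1 h2)
      (fun α β => weilHeight_add_le α β) hf hg,
    fun f g hf hg => aqc_op (· * ·) (fun h1 h2 => mul_mem h1 h2)
      (fun α β => weilHeight_mul_le α β) hf hg,
    aqc_const⟩
end

section
/- Let L ∈ ℕ. A function f : ℕ → ℚ̄ satisfies property (P3) for almost quasi-polynomials if and only if for each b ∈ {0,…,L−1}, the function f_b(m) := f(Lm + b) satisfies property (P3). -/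
open Filter Polynomial

open Finset

lemma aux_card_mod (d k : ℕ) (hd : 0 < d) (S : Finset ℕ) (hS : S ⊆ range d) :
    ((range (k * d)).filter (fun m => m % d ∈ S)).card = k * S.card := by
  have key : ((range (k * d)).filter (fun m => m % d ∈ S)).card = ((range k) ×ˢ S).card := by
    apply Finset.card_bij' (fun m _ => (m / d, m % d)) (fun p _ => p.1 * d + p.2)
    · intro m hm
      simp only [Finset.mem_filter, Finset.mem_range] at hm
      simp only [Finset.mem_product, Finset.mem_range]
      exact ⟨(Nat.div_lt_iff_lt_mul hd).2 hm.1, hm.2⟩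
    · intro p hp
      simp only [Finset.mem_product, Finset.mem_range] at hp
      have hr : p.2 < d := mem_range.1 (hS hp.2)
      simp only [Finset.mem_filter, Finset.mem_range]
      constructor
      · calc p.1 * d + p.2 < (p.1 + 1) * d := by nlinarith
          _ ≤ k * d := Nat.mul_le_mul_right d hp.1
      · have : (p.1 * d + p.2) % d = p.2 := by
          rw [mul_comm, Nat.mul_add_mod, Nat.mod_eq_of_lt hr]
        rw [this]; exact hp.2
    · intro m _
      rw [mul_comm]; exact Nat.div_add_mod m d
    · intro p hp
      simp only [Finset.mem_product, Finset.mem_range] at hp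
      have hr : p.2 < d := mem_range.1 (hS hp.2)
      have h1 : (p.1 * d + p.2) / d = p.1 := by
        rw [mul_comm, Nat.mul_add_div hd, Nat.div_eq_of_lt hr, Nat.add_zero]
      have h2 : (p.1 * d + p.2) % d = p.2 := by
        rw [mul_comm, Nat.mul_add_mod, Nat.mod_eq_of_lt hr]
      simp [h1, h2]
  rw [key, Finset.card_product, Finset.card_range]

lemma aux_card_split (L M : ℕ) (hL : 0 < L) (Q : ℕ → Prop) [DecidablePred Q] :
    ((range (L * M)).filter Q).card
      = ∑ b ∈ range L, ((range M).filter (fun m => Q (L * m + b))).card := by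
  rw [← Finset.card_sigma]
  apply Finset.card_bij' (fun j _ => (⟨j % L, j / L⟩ : (_ : ℕ) × ℕ))
    (fun p _ => L * p.2 + p.1)
  · intro j hj
    simp only [Finset.mem_filter, Finset.mem_range] at hj
    simp only [Finset.mem_sigma, Finset.mem_filter, Finset.mem_range]
    refine ⟨Nat.mod_lt _ hL, (Nat.div_lt_iff_lt_mul hL).2 (by rw [mul_comm]; exact hj.1), ?_⟩
    rw [Nat.div_add_mod]; exact hj.2
  · intro p hp
    simp only [Finset.mem_sigma, Finset.mem_filter, Finset.mem_range] at hp
    simp only [Finset.mem_filter, Finset.mem_range]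
    constructor
    · calc L * p.2 + p.1 < L * p.2 + L := by omega
        _ = L * (p.2 + 1) := by ring
        _ ≤ L * M := Nat.mul_le_mul_left L hp.2.1
    · exact hp.2.2
  · intro j _
    exact Nat.div_add_mod j L
  · intro p hp
    simp only [Finset.mem_sigma, Finset.mem_filter, Finset.mem_range] at hp
    have h1 : (L * p.2 + p.1) % L = p.1 := by
      rw [Nat.mul_add_mod, Nat.mod_eq_of_lt hp.1]
    have h2 : (L * p.2 + p.1) / L = p.2 := by
      rw [Nat.mul_add_div hL, Nat.div_eq_of_lt hp.1, Nat.add_zero]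
    obtain ⟨b, m⟩ := p
    simp only at h1 h2
    rw [h1, h2]


private lemma fwd (L : ℕ) (hL : 0 < L) (f : ℕ → Qbar) (h : PropP3Poly f) :
    ∀ b : ℕ, b < L → PropP3Poly (fun m => f (L * m + b)) := by
  obtain ⟨d, hmono, hpos, G, hGsub, hGlim, P, hspec⟩ := h
  intro b hb
  refine ⟨d, hmono, hpos,
    fun i => (range (d i)).filter (fun j => (L * j + b) % d i ∈ G i),
    fun i => Finset.filter_subset _ _, ?_,
    fun i j => (P i ((L * j + b) % d i)).comp (C (L : Qbar) * X + C (b : Qbar)), ?_⟩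
  · -- density
    have hbad : ∀ i, ((range (d i)).filter (fun j => ¬ (L * j + b) % d i ∈ G i)).card
        ≤ (L + 1) * ((range (d i)).card - (G i).card) := by
      intro i
      have hle : ((range (d i)).filter (fun j => ¬ (L * j + b) % d i ∈ G i)).card
          ≤ (((range (d i)) \ G i) ×ˢ range (L + 1)).card := by
        apply Finset.card_le_card_of_injOn
          (fun j => ((L * j + b) % d i, (L * j + b) / d i))
        · intro j hj
          simp only [Finset.mem_coe, Finset.mem_filter, Finset.mem_range] at hj
          simp only [Finset.mem_coe, Finset.mem_product, Finset.mem_sdiff, Finset.mem_range]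
          refine ⟨⟨Nat.mod_lt _ (hpos i), hj.2⟩, ?_⟩
          have h1 : L * j + b < L * d i := by
            calc L * j + b < L * j + L := by omega
              _ = L * (j + 1) := by ring
              _ ≤ L * d i := Nat.mul_le_mul_left L hj.1
          have h2 : L * j + b < (L + 1) * d i := by nlinarith [hpos i]
          exact (Nat.div_lt_iff_lt_mul (hpos i)).2 h2
        · intro j1 h1 j2 h2 heq
          simp only [Prod.mk.injEq] at heq
          have e1 : L * j1 + b = L * j2 + b := by
            conv_lhs => rw [← Nat.div_add_mod (L * j1 + b) (d i)]
            conv_rhs => rw [← Nat.div_add_mod (L * j2 + b) (d i)]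
            rw [heq.1, heq.2]
          have : L * j1 = L * j2 := by omega
          exact Nat.eq_of_mul_eq_mul_left hL this
      rw [Finset.card_product, Finset.card_range, Finset.card_sdiff_of_subset (hGsub i)] at hle
      exact le_trans hle (le_of_eq (mul_comm _ _))
    -- squeeze
    have hup : ∀ i, (((range (d i)).filter
        (fun j => (L * j + b) % d i ∈ G i)).card : ℝ) / (d i : ℝ) ≤ 1 := by
      intro i
      have hd : (0 : ℝ) < d i := by exact_mod_cast hpos i
      rw [div_le_one hd]
      exact_mod_cast le_trans (Finset.card_filter_le _ _) (le_of_eq (Finset.card_range _))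
    have hlow : ∀ i, (1 : ℝ) - (L + 1) * (1 - ((G i).card : ℝ) / (d i : ℝ))
        ≤ (((range (d i)).filter (fun j => (L * j + b) % d i ∈ G i)).card : ℝ) / (d i : ℝ) := by
      intro i
      have hd : (0 : ℝ) < d i := by exact_mod_cast hpos i
      have hsplit := Finset.card_filter_add_card_filter_not
        (s := range (d i)) (fun j => (L * j + b) % d i ∈ G i)
      rw [Finset.card_range] at hsplit
      have hGle : (G i).card ≤ d i := by
        have := Finset.card_le_card (hGsub i); rwa [Finset.card_range] at this
      have hb' := hbad i
      rw [Finset.card_range] at hb'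
      have hbR : (((range (d i)).filter (fun j => ¬ (L * j + b) % d i ∈ G i)).card : ℝ)
          ≤ (L + 1) * ((d i : ℝ) - (G i).card) := by
        have := (Nat.cast_le (α := ℝ)).2 hb'
        push_cast [Nat.cast_sub hGle] at this
        convert this using 2 <;> push_cast <;> ring
      have hsR : (((range (d i)).filter (fun j => (L * j + b) % d i ∈ G i)).card : ℝ)
          + (((range (d i)).filter (fun j => ¬ (L * j + b) % d i ∈ G i)).card : ℝ) = d i := by
        exact_mod_cast congrArg (Nat.cast (R := ℝ)) hsplit
      have key : (d i : ℝ) - (L + 1) * ((d i : ℝ) - (G i).card)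
          ≤ (((range (d i)).filter (fun j => (L * j + b) % d i ∈ G i)).card : ℝ) := by
        linarith
      calc (1 : ℝ) - (L + 1) * (1 - ((G i).card : ℝ) / (d i : ℝ))
          = ((d i : ℝ) - (L + 1) * ((d i : ℝ) - (G i).card)) / (d i : ℝ) := by
            field_simp
        _ ≤ _ := by gcongr
    have hlimlow : Tendsto (fun i => (1 : ℝ) - (L + 1) * (1 - ((G i).card : ℝ) / (d i : ℝ)))
        atTop (nhds 1) := by
      have : Tendsto (fun i => (1 : ℝ) - (L + 1) * (1 - ((G i).card : ℝ) / (d i : ℝ)))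
          atTop (nhds ((1 : ℝ) - (L + 1) * (1 - 1))) :=
        tendsto_const_nhds.sub (tendsto_const_nhds.mul (tendsto_const_nhds.sub hGlim))
      simpa using this
    exact tendsto_of_tendsto_of_tendsto_of_le_of_le hlimlow tendsto_const_nhds hlow hup
  · -- pointwise
    intro i j hj
    simp only [Finset.mem_filter, Finset.mem_range] at hj
    obtain ⟨N, hN⟩ := hspec i ((L * j + b) % d i) hj.2
    refine ⟨N, fun m hm hmod => ?_⟩
    have hmodn : (L * m + b) % d i = (L * j + b) % d i := by
      have h1 : m ≡ j [MOD d i] := by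
        unfold Nat.ModEq; rw [hmod, Nat.mod_eq_of_lt hj.1]
      exact ((h1.mul_left L).add_right b)
    have hge : L * m + b ≥ N := le_trans hm (by nlinarith)
    have := hN (L * m + b) hge hmodn
    show f (L * m + b) = _
    rw [this, eval_comp]
    congr 1
    push_cast
    simp


private lemma bwd (L : ℕ) (hL : 0 < L) (f : ℕ → Qbar)
    (h : ∀ b : ℕ, b < L → PropP3Poly (fun m => f (L * m + b))) : PropP3Poly f := by
  have h' : ∀ b : ℕ, PropP3Poly (fun m => f (L * m + b % L)) := fun b => by
    have hb := Nat.mod_lt b hL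
    exact h (b % L) hb
  simp only [PropP3Poly] at h'
  choose d hmono hpos G hGsub hGlim P hspec using h'
  set Pi : ℕ → ℕ := fun i => ∏ b ∈ range L, d b i with hPi
  have hPipos : ∀ i, 0 < Pi i := fun i => Finset.prod_pos (fun b _ => hpos b i)
  have hPimono : StrictMono Pi := by
    intro i k hik
    exact Finset.prod_lt_prod_of_nonempty (fun b _ => hpos b i)
      (fun b _ => hmono b hik) ⟨0, Finset.mem_range.2 hL⟩
  have hdvd : ∀ b ∈ range L, ∀ i, d b i ∣ Pi i := fun b hb i =>
    Finset.dvd_prod_of_mem _ hb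
  refine ⟨fun i => L * Pi i, ?_, fun i => Nat.mul_pos hL (hPipos i),
    fun i => (range (L * Pi i)).filter
      (fun j => (j / L) % d (j % L) i ∈ G (j % L) i),
    fun i => Finset.filter_subset _ _, ?_,
    fun i j => (P (j % L) i ((j / L) % d (j % L) i)).comp
      (Polynomial.C ((L : Qbar))⁻¹ * (Polynomial.X - Polynomial.C ((j % L : ℕ) : Qbar))), ?_⟩
  · exact fun i k hik => (Nat.mul_lt_mul_left hL).2 (hPimono hik)
  · -- density
    have hcard : ∀ i, ((range (L * Pi i)).filter
        (fun j => (j / L) % d (j % L) i ∈ G (j % L) i)).card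
        = ∑ b ∈ range L, (Pi i / d b i) * (G b i).card := by
      intro i
      rw [aux_card_split L (Pi i) hL _]
      refine Finset.sum_congr rfl fun b hb => ?_
      have hb' : b < L := Finset.mem_range.1 hb
      have e1 : ∀ m, (L * m + b) % L = b := fun m => by
        rw [Nat.mul_add_mod, Nat.mod_eq_of_lt hb']
      have e2 : ∀ m, (L * m + b) / L = m := fun m => by
        rw [Nat.mul_add_div hL, Nat.div_eq_of_lt hb', Nat.add_zero]
      have efilt : (range (Pi i)).filter
          (fun m => ((L * m + b) / L) % d ((L * m + b) % L) i ∈ G ((L * m + b) % L) i)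
          = (range (Pi i)).filter (fun m => m % d b i ∈ G b i) := by
        apply Finset.filter_congr
        intro m _
        rw [e1, e2]
      rw [efilt]
      have := aux_card_mod (d b i) (Pi i / d b i) (hpos b i) (G b i) (hGsub b i)
      rwa [Nat.div_mul_cancel (hdvd b hb i)] at this
    have heq : ∀ i, (((range (L * Pi i)).filter
        (fun j => (j / L) % d (j % L) i ∈ G (j % L) i)).card : ℝ) / ((L * Pi i : ℕ) : ℝ)
        = ∑ b ∈ range L, ((G b i).card : ℝ) / (d b i : ℝ) / (L : ℝ) := by
      intro i
      rw [hcard i, Nat.cast_sum, Finset.sum_div]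
      refine Finset.sum_congr rfl fun b hb => ?_
      have hdne : ((d b i : ℕ) : ℝ) ≠ 0 := Nat.cast_ne_zero.2 (hpos b i).ne'
      have hPne : ((Pi i : ℕ) : ℝ) ≠ 0 := Nat.cast_ne_zero.2 (hPipos i).ne'
      have hLne : ((L : ℕ) : ℝ) ≠ 0 := Nat.cast_ne_zero.2 hL.ne'
      rw [Nat.cast_mul, Nat.cast_div (hdvd b hb i) hdne, Nat.cast_mul]
      field_simp
    have hsum : Tendsto (fun i => ∑ b ∈ range L, ((G b i).card : ℝ) / (d b i : ℝ) / (L : ℝ))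
        atTop (nhds (∑ b ∈ range L, (1 : ℝ) / (L : ℝ))) :=
      tendsto_finset_sum _ (fun b _ => by
        simpa using (hGlim b).div_const (L : ℝ))
    have hone : (∑ b ∈ range L, (1 : ℝ) / (L : ℝ)) = 1 := by
      rw [Finset.sum_const, Finset.card_range, nsmul_eq_mul]
      field_simp
    rw [hone] at hsum
    exact hsum.congr (fun i => (heq i).symm)
  · -- pointwise
    intro i j hj
    simp only [Finset.mem_filter, Finset.mem_range] at hj
    obtain ⟨hjlt, hjG⟩ := hj
    have hb : j % L < L := Nat.mod_lt _ hL
    obtain ⟨N, hN⟩ := hspec (j % L) i ((j / L) % d (j % L) i) hjG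
    refine ⟨L * N + L, fun n hn hmod => ?_⟩
    have hLdvd : L ∣ L * Pi i := Dvd.intro _ rfl
    have hbn : n % L = j % L := by
      have := Nat.mod_mod_of_dvd n hLdvd
      rw [hmod] at this
      exact this.symm
    set m := n / L with hm
    have hnm : L * m + j % L = n := by
      rw [← hbn, hm]; exact Nat.div_add_mod n L
    have hmN : m ≥ N := by
      have h1 : (L * N + L) / L ≤ n / L := Nat.div_le_div_right hn
      rw [Nat.mul_add_div hL, Nat.div_self hL] at h1
      omega
    have hmmod : m % d (j % L) i = (j / L) % d (j % L) i := by
      have hq : L * Pi i * (n / (L * Pi i)) + j = n := by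
        conv_rhs => rw [← Nat.div_add_mod n (L * Pi i), hmod]
      have hmval : m = Pi i * (n / (L * Pi i)) + j / L := by
        conv_lhs => rw [hm]
        conv_lhs => rw [← hq]
        rw [mul_assoc, Nat.mul_add_div hL]
      obtain ⟨e, he⟩ : d (j % L) i ∣ Pi i * (n / (L * Pi i)) :=
        Dvd.dvd.mul_right (hdvd (j % L) (Finset.mem_range.2 hb) i) _
      rw [hmval, he, Nat.mul_add_mod]
    have hval := hN m hmN hmmod
    have hbb : j % L % L = j % L := Nat.mod_mod_of_dvd _ dvd_rfl
    rw [hbb] at hval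
    have hfn : f n = (P (j % L) i ((j / L) % d (j % L) i)).eval (m : Qbar) := by
      rw [← hnm]; exact hval
    rw [hfn, eval_comp]
    congr 1
    have hL0 : ((L : ℕ) : Qbar) ≠ 0 := Nat.cast_ne_zero.2 hL.ne'
    have hcast : (n : Qbar) = (L : Qbar) * (m : Qbar) + ((j % L : ℕ) : Qbar) := by
      rw [← hnm]; push_cast; ring
    simp only [eval_mul, eval_add, eval_sub, eval_C, eval_X, hcast]
    rw [add_sub_cancel_right, inv_mul_cancel_left₀ hL0]


/-- `f` satisfies property (P3) if and only if, for each
`b ∈ {0, …, L-1}`, the function `m ↦ f (L * m + b)` satisfies property (P3). -/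
theorem propP3_iff_progressions (L : ℕ) (hL : 0 < L) (f : ℕ → Qbar) :
    PropP3Poly f ↔ ∀ b : ℕ, b < L → PropP3Poly (fun m => f (L * m + b)) :=
  ⟨fwd L hL f, bwd L hL f⟩
end

section
/- Let f : ℕ → ℚ̄ be both a quasi-polynomial and an almost quasi-constant. Then f is a quasi-constant, i.e., there exist d ∈ ℕ and constants c_0,…,c_{d−1} such that f(n) = c_j for all sufficiently large n ≡ j (mod d). -/
open Filter Polynomial

lemma aux_eq_C_of_freq {p : Polynomial Qbar} {a : Qbar}
    (h : ∀ m : ℕ, ∃ n ≥ m, p.eval (n : Qbar) = a) : p = Polynomial.C a := by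
  have hs : {n : ℕ | p.eval (n : Qbar) = a}.Infinite := by
    apply Set.infinite_of_not_bddAbove
    rintro ⟨m, hm⟩
    obtain ⟨n, hn, he⟩ := h (m + 1)
    exact absurd (hm he) (by omega)
  have h2 : {x : Qbar | (p - Polynomial.C a).IsRoot x}.Infinite := by
    apply (hs.image (Nat.cast_injective.injOn)).mono
    rintro x ⟨n, hn, rfl⟩
    simp only [Set.mem_setOf_eq] at hn ⊢
    simp [Polynomial.IsRoot, sub_eq_zero, hn]
  have := Polynomial.eq_zero_of_infinite_isRoot _ h2
  have := sub_eq_zero.mp this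
  simpa using this

lemma aux_main (f : ℕ → Qbar)
    (h1 : ∃ d : ℕ, 0 < d ∧ ∃ P : ℕ → Polynomial Qbar, ∃ N : ℕ,
      ∀ n ≥ N, f n = (P (n % d)).eval (n : Qbar))
    (h2 : ∃ d : ℕ → ℕ, StrictMono d ∧ (∀ i, 0 < d i) ∧
    ∃ G : ℕ → Finset ℕ, (∀ i, G i ⊆ Finset.range (d i)) ∧
      Tendsto (fun i => ((G i).card : ℝ) / (d i : ℝ)) atTop (nhds 1) ∧
      ∃ c : ℕ → ℕ → Qbar, ∀ i, ∀ j ∈ G i,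
        ∃ N : ℕ, ∀ n ≥ N, n % d i = j → f n = c i j) :
    ∃ d : ℕ, 0 < d ∧ ∃ c : ℕ → Qbar, ∃ N : ℕ, ∀ n ≥ N, f n = c (n % d) := by
  obtain ⟨d, hd, P, N1, hP⟩ := h1
  obtain ⟨d', hmono, hpos, G, hGsub, htend, c, hc⟩ := h2
  have key : ∀ j < d, ∃ a : Qbar, P j = Polynomial.C a := by
    intro j hj
    -- pick i with density > 1 - 1/d
    have hlt : (1 : ℝ) - 1 / d < 1 := by
      have : (0:ℝ) < 1 / d := by positivity
      linarith
    obtain ⟨i, hi⟩ := (htend.eventually (eventually_gt_nhds hlt)).exists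
    set D := d' i with hDdef
    have hD : 0 < D := hpos i
    set g := Nat.gcd d D with hgdef
    have hg : 0 < g := Nat.gcd_pos_of_pos_left _ hd
    have hgD : g ∣ D := Nat.gcd_dvd_right _ _
    have hgd : g ≤ d := Nat.le_of_dvd hd (Nat.gcd_dvd_left _ _)
    -- find j' ∈ G i with j' % g = j % g
    have hexists : ∃ j' ∈ G i, j' % g = j % g := by
      by_contra hno
      push_neg at hno
      set T := (Finset.range D).filter (fun x => x % g = j % g) with hT
      have hTcard : D / g ≤ T.card := by
        rw [← Finset.card_range (D / g)]
        apply Finset.card_le_card_of_injOn (fun t => j % g + t * g)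
        · intro t ht
          simp only [Finset.mem_coe, Finset.mem_range] at ht
          simp only [hT, Finset.mem_coe, Finset.mem_filter, Finset.mem_range]
          constructor
          · calc j % g + t * g < g + t * g := by
                  have := Nat.mod_lt j hg; omega
              _ = (t + 1) * g := by ring
              _ ≤ (D / g) * g := Nat.mul_le_mul_right _ (by omega)
              _ = D := Nat.div_mul_cancel hgD
          · rw [Nat.add_mul_mod_self_right, Nat.mod_mod_of_dvd j dvd_rfl]
        · intro t1 _ t2 _ he
          simp only at he
          have h' : t1 * g = t2 * g := by omega
          exact Nat.eq_of_mul_eq_mul_right hg h'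
      have hTsub : T ⊆ Finset.range D \ G i := by
        intro x hx
        simp only [hT, Finset.mem_filter] at hx
        simp only [Finset.mem_sdiff]
        exact ⟨hx.1, fun hxG => hno x hxG hx.2⟩
      have hcompl : (Finset.range D \ G i).card = D - (G i).card := by
        rw [Finset.card_sdiff_of_subset (hGsub i), Finset.card_range]
      have hle : D / g ≤ D - (G i).card := by
        calc D / g ≤ T.card := hTcard
          _ ≤ (Finset.range D \ G i).card := Finset.card_le_card hTsub
          _ = D - (G i).card := hcompl
      -- real contradiction
      have hcardle : (G i).card ≤ D := by
        simpa using Finset.card_le_card (hGsub i)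
      have hreal1 : ((G i).card : ℝ) > (D : ℝ) - (D : ℝ) / d := by
        have hDpos : (0:ℝ) < (D:ℝ) := by exact_mod_cast hD
        have hdpos : (0:ℝ) < (d:ℝ) := by exact_mod_cast hd
        have hi' := (lt_div_iff₀ hDpos).mp hi
        have e : ((1:ℝ) - 1 / d) * D = (D:ℝ) - (D:ℝ) / d := by field_simp
        rw [e] at hi'
        linarith
      have hreal2 : ((D / g : ℕ) : ℝ) = (D : ℝ) / (g : ℝ) := by
        rw [Nat.cast_div hgD (by exact_mod_cast hg.ne')]
      have hreal3 : (D : ℝ) / d ≤ (D : ℝ) / g := by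
        apply div_le_div_of_nonneg_left (by positivity) (by exact_mod_cast hg) (by exact_mod_cast hgd)
      have hreal4 : ((D / g : ℕ) : ℝ) ≤ (D : ℝ) - ((G i).card : ℝ) := by
        rw [← Nat.cast_sub hcardle]
        exact_mod_cast hle
      rw [hreal2] at hreal4
      linarith
    obtain ⟨j', hj'G, hj'mod⟩ := hexists
    have hj'lt : j' < D := by simpa using hGsub i hj'G
    obtain ⟨N2, hc2⟩ := hc i j' hj'G
    obtain ⟨k, hk1, hk2⟩ := Nat.chineseRemainder' (n := d) (m := D) (a := j) (b := j')
      (show j ≡ j' [MOD Nat.gcd d D] from (hj'mod.symm : j % g = j' % g))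
    refine ⟨c i j', aux_eq_C_of_freq ?_⟩
    intro m
    set t := m + N1 + N2 + 1 with htdef
    set n := k + t * (d * D) with hndef
    have hdD : 1 ≤ d * D := Nat.one_le_iff_ne_zero.mpr (by positivity)
    have hge : n ≥ t := by
      calc n = k + t * (d * D) := rfl
        _ ≥ t * 1 := by nlinarith
        _ = t := by ring
    have hnd : n % d = j := by
      have : n % d = k % d := by
        rw [hndef, show t * (d * D) = (t * D) * d by ring, Nat.add_mul_mod_self_right]
      rw [this, hk1]
      exact Nat.mod_eq_of_lt hj
    have hnD : n % D = j' := by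
      have : n % D = k % D := by
        rw [hndef, show t * (d * D) = (t * d) * D by ring, Nat.add_mul_mod_self_right]
      rw [this, hk2]
      exact Nat.mod_eq_of_lt hj'lt
    refine ⟨n, by omega, ?_⟩
    have e1 : f n = (P j).eval (n : Qbar) := by
      have := hP n (by omega)
      rwa [hnd] at this
    have e2 : f n = c i j' := hc2 n (by omega) hnD
    rw [← e1, e2]
  refine ⟨d, hd, fun j => (P j).coeff 0, N1, fun n hn => ?_⟩
  obtain ⟨a, ha⟩ := key (n % d) (Nat.mod_lt n hd)
  rw [hP n hn, ha]
  simp [ha]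


/-- a function that is both a quasi-polynomial and an almost
quasi-constant is a quasi-constant. -/
theorem quasiPolynomial_and_almostQuasiConstant_is_quasiConstant (f : ℕ → Qbar)
    (h1 : QuasiPolynomial f) (h2 : AlmostQuasiConstant f) : QuasiConstant f := by
  exact aux_main f h1 h2.2.2
end

section
/- Every non-degenerate linear recurrence sequence over a number field K is v-stable for every place v of K. -/
open Filter Polynomial
open scoped Classical

/-- A (standard-form) representation of a linear recurrence (polynomial-exponential)
sequence over a field `K`: distinct nonzero characteristic roots `α i` and nonzero
polynomial coefficients `P i`. -/
structure LinRecRep (K : Type*) [Field K] where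
  r : ℕ
  hr : 0 < r
  α : Fin r → K
  P : Fin r → Polynomial K
  hα : ∀ i, α i ≠ 0
  hdist : Function.Injective α
  hP : ∀ i, P i ≠ 0

namespace LinRecRep

variable {K : Type*} [Field K] (U : LinRecRep K)

/-- The sequence `u n = Σ_i P_i(n) α_i ^ n`. -/
noncomputable def seq (n : ℕ) : K :=
  ∑ i : Fin U.r, (U.P i).eval (n : K) * U.α i ^ n

/-- `M = max_i |α i|_v`. -/
noncomputable def vMax (v : AbsoluteValue K ℝ) : ℝ :=
  Finset.univ.sup' (Finset.univ_nonempty_iff.2 ⟨⟨0, U.hr⟩⟩) fun i => v (U.α i)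

/-- The essential `v`-part `u_{v,n}`: the subsum over the characteristic roots of
maximal `v`-absolute value. -/
noncomputable def essential (v : AbsoluteValue K ℝ) (n : ℕ) : K :=
  ∑ i : Fin U.r,
    if v (U.α i) = U.vMax v then (U.P i).eval (n : K) * U.α i ^ n else 0

/-- `v`-stability: the essential `v`-part restricted to any arithmetic progression
`a n + b` is not the zero sequence. -/
def vStable (v : AbsoluteValue K ℝ) : Prop :=
  ∀ a b : ℕ, 0 < a → 0 < b → ∃ n : ℕ, U.essential v (a * n + b) ≠ 0

end LinRecRep


lemma key_lemma {ι : Type*} {K : Type*} [Field K] [CharZero K] :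
    ∀ (N : ℕ) (s : Finset ι) (β : ι → K) (Q : ι → Polynomial K),
      (∑ i ∈ s, ((Q i).natDegree + 1)) ≤ N →
      (∀ i ∈ s, β i ≠ 0) →
      (Set.InjOn β s) →
      (∀ i ∈ s, Q i ≠ 0) →
      (∀ n : ℕ, ∑ i ∈ s, (Q i).eval (n : K) * β i ^ n = 0) →
      s = ∅ := by
  intro N
  induction N with
  | zero =>
    intro s β Q hm _ _ _ _
    rcases s.eq_empty_or_nonempty with rfl | hne
    · rfl
    · have : 0 < ∑ i ∈ s, ((Q i).natDegree + 1) :=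
        Finset.sum_pos (fun i _ => Nat.succ_pos _) hne
      omega
  | succ N ih =>
    intro s β Q hm hβ hinj hQ hsum
    rcases s.eq_empty_or_nonempty with rfl | ⟨j, hj⟩
    · rfl
    exfalso
    set R : ι → Polynomial K :=
      fun i => C (β i) * (Q i).comp (X + C 1) - C (β j) * Q i with hR
    -- basic facts about comp (X + 1)
    have hdc : ∀ i : ι, ((Q i).comp (X + C 1)).natDegree = (Q i).natDegree := by
      intro i; rw [natDegree_comp, natDegree_X_add_C, mul_one]
    have hlc : ∀ i : ι, ((Q i).comp (X + C 1)).leadingCoeff = (Q i).leadingCoeff := by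
      intro i
      rw [leadingCoeff_comp (by rw [natDegree_X_add_C]; exact one_ne_zero),
        (monic_X_add_C (1 : K)).leadingCoeff, one_pow, mul_one]
    -- natDegree bound
    have f1 : ∀ i : ι, (R i).natDegree ≤ (Q i).natDegree := by
      intro i
      refine le_trans (natDegree_sub_le _ _) (max_le ?_ ?_)
      · exact le_trans (natDegree_C_mul_le _ _) (le_of_eq (hdc i))
      · exact natDegree_C_mul_le _ _
    -- off-diagonal nonvanishing
    have f2 : ∀ i ∈ s, i ≠ j → R i ≠ 0 := by
      intro i hi hij
      have hco : (R i).coeff (Q i).natDegree = (β i - β j) * (Q i).leadingCoeff := by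
        rw [hR]
        simp only [coeff_sub, coeff_C_mul]
        rw [show (Q i).natDegree = ((Q i).comp (X + C 1)).natDegree from (hdc i).symm,
          coeff_natDegree, hlc i, hdc i, coeff_natDegree]
        ring
      have hne' : (β i - β j) * (Q i).leadingCoeff ≠ 0 :=
        mul_ne_zero (sub_ne_zero.2 (fun h => hij (hinj hi hj h)))
          (leadingCoeff_ne_zero.2 (hQ i hi))
      intro h0
      rw [h0, coeff_zero] at hco
      exact hne' hco.symm
    -- diagonal degree drop
    have f3 : R j ≠ 0 → (R j).natDegree < (Q j).natDegree := by
      intro hRj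
      have hRjeq : R j = C (β j) * ((Q j).comp (X + C 1) - Q j) := by rw [hR]; ring
      have hdiff : (Q j).comp (X + C 1) - Q j ≠ 0 := by
        intro h; rw [hRjeq, h, mul_zero] at hRj; exact hRj rfl
      have hcompne : (Q j).comp (X + C 1) ≠ 0 := by
        intro h
        have := hlc j
        rw [h, leadingCoeff_zero] at this
        exact hQ j hj (leadingCoeff_eq_zero.1 this.symm)
      have hdeg : ((Q j).comp (X + C 1)).degree = (Q j).degree := by
        rw [degree_eq_natDegree hcompne, degree_eq_natDegree (hQ j hj), hdc j]
      have hlt : ((Q j).comp (X + C 1) - Q j).degree < (Q j).degree := by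
        have := degree_sub_lt hdeg hcompne (hlc j)
        rwa [hdeg] at this
      have hdegR : (R j).degree < (Q j).degree := by
        rw [hRjeq, degree_C_mul (hβ j hj)]
        exact hlt
      exact natDegree_lt_natDegree hRj hdegR
    set s' : Finset ι := s.filter (fun i => R i ≠ 0) with hs'
    -- new sum vanishes
    have f4 : ∀ n : ℕ, ∑ i ∈ s', (R i).eval (n : K) * β i ^ n = 0 := by
      intro n
      have heq : ∑ i ∈ s', (R i).eval (n : K) * β i ^ n
          = ∑ i ∈ s, (R i).eval (n : K) * β i ^ n := by
        refine Finset.sum_filter_of_ne ?_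
        intro i _ hne0 h0
        rw [h0] at hne0; simp at hne0
      rw [heq]
      have hterm : ∀ i ∈ s, (R i).eval (n : K) * β i ^ n
          = (Q i).eval (((n+1 : ℕ) : K)) * β i ^ (n+1)
            - β j * ((Q i).eval (n : K) * β i ^ n) := by
        intro i _
        rw [hR]
        simp only [eval_sub, eval_mul, eval_C, eval_comp, eval_add, eval_X]
        push_cast
        ring
      rw [Finset.sum_congr rfl hterm, Finset.sum_sub_distrib, ← Finset.mul_sum,
        hsum, hsum n, mul_zero, sub_zero]
    -- measure decreases
    have f5 : (∑ i ∈ s', ((R i).natDegree + 1)) ≤ N := by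
      have hsub : s'.erase j ⊆ s.erase j :=
        Finset.erase_subset_erase _ (Finset.filter_subset _ _)
      have hA : ∑ i ∈ s'.erase j, ((R i).natDegree + 1)
          ≤ ∑ i ∈ s.erase j, ((Q i).natDegree + 1) := by
        calc ∑ i ∈ s'.erase j, ((R i).natDegree + 1)
            ≤ ∑ i ∈ s'.erase j, ((Q i).natDegree + 1) :=
              Finset.sum_le_sum (fun i _ => by have := f1 i; omega)
          _ ≤ ∑ i ∈ s.erase j, ((Q i).natDegree + 1) :=
              Finset.sum_le_sum_of_subset hsub
      have hsplit : ((Q j).natDegree + 1) + ∑ i ∈ s.erase j, ((Q i).natDegree + 1)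
          = ∑ i ∈ s, ((Q i).natDegree + 1) := Finset.add_sum_erase s (fun i => (Q i).natDegree + 1) hj
      by_cases hj' : j ∈ s'
      · have hsplit' : ((R j).natDegree + 1) + ∑ i ∈ s'.erase j, ((R i).natDegree + 1)
            = ∑ i ∈ s', ((R i).natDegree + 1) := Finset.add_sum_erase s' (fun i => (R i).natDegree + 1) hj'
        have hRj : R j ≠ 0 := (Finset.mem_filter.1 hj').2
        have := f3 hRj
        omega
      · have : s'.erase j = s' := Finset.erase_eq_of_notMem hj'
        rw [← this]
        omega
    have hs'empty : s' = ∅ :=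
      ih s' β R f5 (fun i hi => hβ i (Finset.filter_subset _ _ hi))
        (hinj.mono (by intro x hx; exact Finset.filter_subset _ _ hx))
        (fun i hi => (Finset.mem_filter.1 hi).2) f4
    -- hence s = {j}
    have hsj : s = {j} := by
      apply Finset.eq_singleton_iff_unique_mem.2
      refine ⟨hj, fun i hi => ?_⟩
      by_contra hij
      have : i ∈ s' := Finset.mem_filter.2 ⟨hi, f2 i hi hij⟩
      rw [hs'empty] at this
      exact absurd this (Finset.notMem_empty i)
    -- then Q j vanishes at all naturals
    have hroots : ∀ n : ℕ, (Q j).eval (n : K) = 0 := by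
      intro n
      have := hsum n
      rw [hsj, Finset.sum_singleton] at this
      exact (mul_eq_zero.1 this).resolve_right (pow_ne_zero _ (hβ j hj))
    have : Q j = 0 := by
      apply Polynomial.eq_zero_of_infinite_isRoot
      exact Set.infinite_of_injective_forall_mem (f := fun n : ℕ => (n : K))
        Nat.cast_injective (fun n => hroots n)
    exact hQ j hj this

/-- a non-degenerate linear recurrence sequence over a number field is
`v`-stable for every place (absolute value) `v`. -/
theorem nondegenerate_vStable {K : Type*} [Field K] [NumberField K]
    (U : LinRecRep K)
    (hnd : ∀ i j : Fin U.r, i ≠ j → ∀ k : ℕ, 0 < k → (U.α i / U.α j) ^ k ≠ 1) :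
    ∀ v : AbsoluteValue K ℝ, U.vStable v := by
  intro v a b ha hb
  by_contra hcon
  push_neg at hcon
  classical
  set s : Finset (Fin U.r) := Finset.univ.filter (fun i => v (U.α i) = U.vMax v) with hs
  have hne : s.Nonempty := by
    obtain ⟨i, _, hi⟩ := Finset.exists_mem_eq_sup'
      (Finset.univ_nonempty_iff.2 ⟨⟨0, U.hr⟩⟩) (fun i => v (U.α i))
    exact ⟨i, Finset.mem_filter.2 ⟨Finset.mem_univ _, hi.symm⟩⟩
  set Q : Fin U.r → Polynomial K :=
    fun i => (U.P i).comp (C (a : K) * X + C (b : K)) * C (U.α i ^ b) with hQdef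
  set β : Fin U.r → K := fun i => U.α i ^ a with hβdef
  have hnaK : (a : K) ≠ 0 := Nat.cast_ne_zero.2 ha.ne'
  apply hne.ne_empty
  apply key_lemma (∑ i ∈ s, ((Q i).natDegree + 1)) s β Q le_rfl
  · exact fun i _ => pow_ne_zero _ (U.hα i)
  · intro i hi j hj hij
    by_contra hne'
    refine hnd i j hne' a ha ?_
    rw [div_pow, show U.α i ^ a = U.α j ^ a from hij, div_self (pow_ne_zero _ (U.hα j))]
  · intro i _
    refine mul_ne_zero ?_ (C_ne_zero.2 (pow_ne_zero _ (U.hα i)))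
    rw [Ne, comp_eq_zero_iff]
    push_neg
    refine ⟨U.hP i, fun _ h => ?_⟩
    have := congrArg Polynomial.natDegree h
    rw [natDegree_linear hnaK, natDegree_C] at this
    exact one_ne_zero this
  · intro n
    have h0 := hcon n
    rw [LinRecRep.essential, ← Finset.sum_filter] at h0
    rw [← h0]
    refine Finset.sum_congr rfl ?_
    intro i _
    rw [hQdef]
    simp only [eval_mul, eval_comp, eval_add, eval_C, eval_mul, eval_X]
    push_cast
    rw [pow_add, pow_mul]
    ring
end

section
/- Let p be a prime, K_v a finite extension of ℚ_p, and g(x) = Σ c_n x^n ∈ K_v[[x]] with |c_n|_v → 0, viewed as an analytic function ℤ_p → K_v. Then the function f : ℕ → ℝ, f(n) = |g(n)|_v, satisfies: there exist positive integers d_1 < d_2 < ⋯ and sets G_i ⊆ {0,…,d_i−1} with |G_i|/d_i → 1, such that f is constant on each congruence class j mod d_i with j ∈ G_i. -/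
open Filter

theorem summable_aux {p : ℕ} [Fact p.Prime] {Kv : Type*} [NontriviallyNormedField Kv]
    [NormedAlgebra ℚ_[p] Kv] [FiniteDimensional ℚ_[p] Kv] [IsUltrametricDist Kv]
    {β : Type*} (f : β → Kv) (hf : Tendsto (fun b => ‖f b‖) cofinite (nhds 0)) :
    Summable f :=
  haveI : CompleteSpace Kv := FiniteDimensional.complete ℚ_[p] Kv
  NonarchimedeanAddGroup.summable_of_tendsto_cofinite_zero
    (tendsto_zero_iff_norm_tendsto_zero.2 hf)

section Aux

open IsUltrametricDist

variable {p : ℕ} [Fact p.Prime] {Kv : Type*} [NontriviallyNormedField Kv]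
  [NormedAlgebra ℚ_[p] Kv] [FiniteDimensional ℚ_[p] Kv] [IsUltrametricDist Kv]

/-- The canonical ring hom `ℤ_[p] →+* Kv`. -/
noncomputable def phi (p : ℕ) [Fact p.Prime] (Kv : Type*) [NontriviallyNormedField Kv]
    [NormedAlgebra ℚ_[p] Kv] : ℤ_[p] →+* Kv :=
  (algebraMap ℚ_[p] Kv).comp (PadicInt.Coe.ringHom)

/-- The analytic function attached to coefficients `c`. -/
noncomputable def gf (p : ℕ) [Fact p.Prime] {Kv : Type*} [NontriviallyNormedField Kv]
    [NormedAlgebra ℚ_[p] Kv] (c : ℕ → Kv) (x : ℤ_[p]) : Kv :=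
  ∑' k : ℕ, c k * phi p Kv x ^ k

/-- Taylor coefficients of `gf` recentered at `a`. -/
noncomputable def bco (p : ℕ) [Fact p.Prime] {Kv : Type*} [NontriviallyNormedField Kv]
    [NormedAlgebra ℚ_[p] Kv] (c : ℕ → Kv) (a : ℤ_[p]) (k : ℕ) : Kv :=
  ∑' n : ℕ, (n.choose k : Kv) * c n * phi p Kv a ^ (n - k)

section WithIso

variable (hiso : ∀ x : ℚ_[p], ‖algebraMap ℚ_[p] Kv x‖ = ‖x‖)
include hiso

omit [FiniteDimensional ℚ_[p] Kv] [IsUltrametricDist Kv] in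
theorem norm_phi (x : ℤ_[p]) : ‖phi p Kv x‖ = ‖x‖ := by
  rw [phi, RingHom.comp_apply, hiso]; rfl

omit [FiniteDimensional ℚ_[p] Kv] [IsUltrametricDist Kv] in
theorem norm_phi_le_one (x : ℤ_[p]) : ‖phi p Kv x‖ ≤ 1 := by
  rw [norm_phi hiso]; exact x.norm_le_one

omit hiso in
theorem exists_L (c : ℕ → Kv) (hc : Tendsto (fun n => ‖c n‖) atTop (nhds 0)) :
    ∃ L : ℝ, 0 < L ∧ ∀ n, ‖c n‖ ≤ L := by
  obtain ⟨N, hN⟩ := (hc.eventually (gt_mem_nhds one_pos)).exists_forall_of_atTop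
  refine ⟨1 + ∑ n ∈ Finset.range N, ‖c n‖, by positivity, fun n => ?_⟩
  have hs : (0:ℝ) ≤ ∑ n ∈ Finset.range N, ‖c n‖ :=
    Finset.sum_nonneg (fun i _ => norm_nonneg (c i))
  rcases lt_or_ge n N with h | h
  · have : ‖c n‖ ≤ ∑ n ∈ Finset.range N, ‖c n‖ :=
      Finset.single_le_sum (fun i _ => norm_nonneg _) (Finset.mem_range.2 h)
    linarith
  · linarith [(hN n h).le]

theorem summable_main (c : ℕ → Kv) (hc : Tendsto (fun n => ‖c n‖) atTop (nhds 0))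
    (x : ℤ_[p]) : Summable (fun k => c k * phi p Kv x ^ k) := by
  refine summable_aux (p := p) _ ?_
  rw [Nat.cofinite_eq_atTop]
  refine squeeze_zero (fun n => norm_nonneg _) (fun k => ?_) hc
  rw [norm_mul, norm_pow]
  calc ‖c k‖ * ‖phi p Kv x‖ ^ k ≤ ‖c k‖ * 1 :=
        mul_le_mul_of_nonneg_left (pow_le_one₀ (norm_nonneg _) (norm_phi_le_one hiso x))
          (norm_nonneg _)
    _ = ‖c k‖ := mul_one _

omit hiso [FiniteDimensional ℚ_[p] Kv] [IsUltrametricDist Kv] in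
theorem padic_pow_sub_pow (x y : ℤ_[p]) (k : ℕ) : ‖x ^ k - y ^ k‖ ≤ ‖x - y‖ := by
  induction k with
  | zero => simp
  | succ k ih =>
    have h1 : x ^ (k+1) - y ^ (k+1) = x * (x ^ k - y ^ k) + (x - y) * y ^ k := by ring
    rw [h1]
    refine (PadicInt.nonarchimedean _ _).trans (max_le ?_ ?_)
    · rw [norm_mul]
      calc ‖x‖ * ‖x ^ k - y ^ k‖ ≤ 1 * ‖x - y‖ :=
            mul_le_mul x.norm_le_one ih (norm_nonneg _) zero_le_one
        _ = ‖x - y‖ := one_mul _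
    · rw [norm_mul]
      calc ‖x - y‖ * ‖y ^ k‖ ≤ ‖x - y‖ * 1 := by
            refine mul_le_mul_of_nonneg_left ?_ (norm_nonneg _)
            rw [norm_pow]; exact pow_le_one₀ (norm_nonneg _) y.norm_le_one
        _ = ‖x - y‖ := mul_one _

theorem gf_lip (c : ℕ → Kv) (hc : Tendsto (fun n => ‖c n‖) atTop (nhds 0))
    {L : ℝ} (hL : ∀ n, ‖c n‖ ≤ L) (hL0 : 0 ≤ L) (x y : ℤ_[p]) :
    ‖gf p c x - gf p c y‖ ≤ L * ‖x - y‖ := by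
  rw [gf, gf, ← Summable.tsum_sub (summable_main hiso c hc x) (summable_main hiso c hc y)]
  refine norm_tsum_le_of_forall_le_of_nonneg (by positivity) (fun k => ?_)
  rw [← mul_sub, norm_mul, ← map_pow, ← map_pow, ← map_sub, norm_phi hiso]
  exact mul_le_mul (hL k) (padic_pow_sub_pow x y k) (norm_nonneg _)
    ((norm_nonneg _).trans (hL 0))

theorem norm_bco_le (c : ℕ → Kv) {L : ℝ} (hL : ∀ n, ‖c n‖ ≤ L) (hL0 : 0 ≤ L)
    (a : ℤ_[p]) (k : ℕ) : ‖bco p c a k‖ ≤ L := by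
  rw [bco]
  refine norm_tsum_le_of_forall_le_of_nonneg hL0 (fun n => ?_)
  rw [norm_mul, norm_mul, norm_pow]
  calc ‖(n.choose k : Kv)‖ * ‖c n‖ * ‖phi p Kv a‖ ^ (n - k)
      ≤ 1 * L * 1 := by
        refine mul_le_mul (mul_le_mul (norm_natCast_le_one Kv _) (hL n) (norm_nonneg _)
          zero_le_one) (pow_le_one₀ (norm_nonneg _) (norm_phi_le_one hiso a)) (by positivity)
          (by positivity)
    _ = L := by ring

theorem gf_expand (c : ℕ → Kv) (hc : Tendsto (fun n => ‖c n‖) atTop (nhds 0))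
    (a h : ℤ_[p]) : gf p c (a + h) = ∑' k : ℕ, bco p c a k * phi p Kv h ^ k := by
  classical
  haveI : CompleteSpace Kv := FiniteDimensional.complete ℚ_[p] Kv
  set A := phi p Kv a with hA'
  set H := phi p Kv h with hH'
  set F : ℕ × ℕ → Kv := fun q => (q.1.choose q.2 : Kv) * c q.1 * A ^ (q.1 - q.2) * H ^ q.2
    with hF
  have hFle : ∀ q, ‖F q‖ ≤ ‖c q.1‖ := by
    intro q
    rw [hF]
    simp only []
    rw [norm_mul, norm_mul, norm_mul, norm_pow, norm_pow]
    calc ‖(q.1.choose q.2 : Kv)‖ * ‖c q.1‖ * ‖A‖ ^ (q.1 - q.2) * ‖H‖ ^ q.2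
        ≤ 1 * ‖c q.1‖ * 1 * 1 := by
          refine mul_le_mul (mul_le_mul (mul_le_mul (IsUltrametricDist.norm_natCast_le_one Kv _)
            le_rfl (norm_nonneg _) zero_le_one)
            (pow_le_one₀ (norm_nonneg _) (norm_phi_le_one hiso a)) (by positivity) (by positivity))
            (pow_le_one₀ (norm_nonneg _) (norm_phi_le_one hiso h)) (by positivity) (by positivity)
      _ = ‖c q.1‖ := by ring
  have hFsum : Summable F := by
    refine summable_aux (p := p) _ ?_
    rw [Metric.tendsto_nhds]
    intro ε hε
    rw [Filter.eventually_cofinite]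
    obtain ⟨N, hN⟩ := (hc.eventually (gt_mem_nhds hε)).exists_forall_of_atTop
    apply Set.Finite.subset ((Set.finite_Iio N).prod (Set.finite_Iio N))
    rintro ⟨n, k⟩ hq
    simp only [Real.dist_eq, sub_zero, not_lt, Set.mem_setOf_eq] at hq
    have h1 : ε ≤ ‖F (n, k)‖ := by rwa [abs_of_nonneg (norm_nonneg _)] at hq
    have h2 : ε ≤ ‖c n‖ := le_trans h1 (hFle (n, k))
    have hnN : n < N := by
      by_contra hh
      push_neg at hh
      exact absurd (hN n hh) (not_lt.2 h2)
    have hkn : k ≤ n := by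
      by_contra hh
      push_neg at hh
      have hz : F (n, k) = 0 := by
        rw [hF]; simp [Nat.choose_eq_zero_of_lt hh]
      rw [hz, norm_zero] at h1
      linarith
    exact ⟨hnN, lt_of_le_of_lt hkn hnN⟩
  have hrows : ∀ n, Summable fun k => F (n, k) := fun n => hFsum.prod_factor n
  have hcols : ∀ k, Summable fun n => F (n, k) := fun k => hFsum.prod_symm.prod_factor k
  have hrow : ∀ n, ∑' k, F (n, k) = c n * (A + H) ^ n := by
    intro n
    have hzero : ∀ k ∉ Finset.range (n + 1), F (n, k) = 0 := by
      intro k hk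
      have hlt : n < k := by have := Finset.mem_range.not.1 hk; omega
      rw [hF]; simp [Nat.choose_eq_zero_of_lt hlt]
    rw [tsum_eq_sum hzero, show (A + H) ^ n = (H + A) ^ n by rw [add_comm], add_pow,
      Finset.mul_sum]
    refine Finset.sum_congr rfl (fun k hk => ?_)
    rw [hF]; ring
  have hcol : ∀ k, ∑' n, F (n, k) = bco p c a k * H ^ k := by
    intro k
    have hsum2 : Summable (fun n => (n.choose k : Kv) * c n * A ^ (n - k)) := by
      refine summable_aux (p := p) _ ?_
      rw [Nat.cofinite_eq_atTop]
      refine squeeze_zero (fun n => norm_nonneg _) (fun n => ?_) hc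
      rw [norm_mul, norm_mul, norm_pow]
      calc ‖(n.choose k : Kv)‖ * ‖c n‖ * ‖A‖ ^ (n - k) ≤ 1 * ‖c n‖ * 1 := by
            refine mul_le_mul (mul_le_mul (IsUltrametricDist.norm_natCast_le_one Kv _) le_rfl
              (norm_nonneg _) zero_le_one)
              (pow_le_one₀ (norm_nonneg _) (norm_phi_le_one hiso a)) (by positivity)
              (by positivity)
        _ = ‖c n‖ := by ring
    have : bco p c a k = ∑' n, (n.choose k : Kv) * c n * A ^ (n - k) := by rw [bco, hA']
    rw [this, ← hsum2.tsum_mul_right (H ^ k)]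
  calc gf p c (a + h) = ∑' n, c n * (A + H) ^ n := by
        rw [gf]
        exact tsum_congr (fun n => by rw [map_add])
    _ = ∑' n, ∑' k, F (n, k) := tsum_congr (fun n => (hrow n).symm)
    _ = ∑' (k) (n), F (n, k) := (Summable.tsum_comm (f := fun n k => F (n, k)) hFsum).symm
    _ = ∑' k, bco p c a k * H ^ k := tsum_congr (fun k => hcol k)

theorem gf_isolated (c : ℕ → Kv) (hc : Tendsto (fun n => ‖c n‖) atTop (nhds 0))
    {L : ℝ} (hL0 : 0 < L) (a : ℤ_[p]) {k0 : ℕ}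
    (hLb : ∀ k, ‖bco p c a k‖ ≤ L) (hk0 : bco p c a k0 ≠ 0)
    (hmin : ∀ k < k0, bco p c a k = 0) :
    ∀ h : ℤ_[p], h ≠ 0 → ‖h‖ < ‖bco p c a k0‖ / L → gf p c (a + h) ≠ 0 := by
  intro h hne hsmall
  haveI : CompleteSpace Kv := FiniteDimensional.complete ℚ_[p] Kv
  classical
  set H := phi p Kv h with hH'
  have hHnorm : ‖H‖ = ‖h‖ := norm_phi hiso h
  have hb0 : 0 < ‖bco p c a k0‖ := norm_pos_iff.2 hk0
  have hh0 : 0 < ‖h‖ := norm_pos_iff.2 hne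
  have hh1 : ‖h‖ < 1 :=
    lt_of_lt_of_le hsmall (div_le_one_of_le₀ (hLb k0) hL0.le)
  set B : ℕ → Kv := fun k => bco p c a k * H ^ k with hB'
  have hBsum : Summable B := by
    refine summable_aux (p := p) _ ?_
    rw [Nat.cofinite_eq_atTop]
    refine squeeze_zero (fun k => norm_nonneg _) (fun k => ?_)
      (by simpa using (tendsto_pow_atTop_nhds_zero_of_lt_one (norm_nonneg h) hh1).const_mul L)
    rw [hB']
    simp only []
    rw [norm_mul, norm_pow, hHnorm]
    exact mul_le_mul_of_nonneg_right (hLb k) (by positivity)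
  have hkey : gf p c (a + h) = ∑' k, B k := gf_expand hiso c hc a h
  have hsplit : ∑' k, B k = B k0 + ∑' k, if k = k0 then 0 else B k :=
    Summable.tsum_eq_add_tsum_ite hBsum k0
  set R := ∑' k, if k = k0 then 0 else B k with hR'
  have hRle : ‖R‖ ≤ L * ‖h‖ ^ (k0 + 1) := by
    refine norm_tsum_le_of_forall_le_of_nonneg (by positivity) (fun k => ?_)
    rcases eq_or_ne k k0 with rfl | hkk
    · simp; positivity
    · rw [if_neg hkk]
      rcases lt_or_ge k k0 with hlt | hge
      · rw [hB']; simp [hmin k hlt]; positivity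
      · have hgt : k0 + 1 ≤ k := by omega
        rw [hB']
        simp only []
        rw [norm_mul, norm_pow, hHnorm]
        exact mul_le_mul (hLb k)
          (pow_le_pow_of_le_one (norm_nonneg h) hh1.le hgt) (by positivity) hL0.le
  have hBk0norm : ‖B k0‖ = ‖bco p c a k0‖ * ‖h‖ ^ k0 := by
    rw [hB']; simp only []; rw [norm_mul, norm_pow, hHnorm]
  have hC : L * ‖h‖ ^ (k0 + 1) < ‖B k0‖ := by
    rw [hBk0norm, pow_succ]
    have hLh : L * ‖h‖ < ‖bco p c a k0‖ := by
      have := (lt_div_iff₀ hL0).1 hsmall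
      linarith [this]
    calc L * (‖h‖ ^ k0 * ‖h‖) = (L * ‖h‖) * ‖h‖ ^ k0 := by ring
      _ < ‖bco p c a k0‖ * ‖h‖ ^ k0 :=
        mul_lt_mul_of_pos_right hLh (pow_pos hh0 k0)
  have hRlt : ‖R‖ < ‖B k0‖ := lt_of_le_of_lt hRle hC
  have hmax : ‖B k0‖ ≤ max ‖∑' k, B k‖ ‖R‖ := by
    have he : B k0 = (∑' k, B k) + -R := by rw [hsplit]; ring
    calc ‖B k0‖ = ‖(∑' k, B k) + -R‖ := by rw [← he]
      _ ≤ max ‖∑' k, B k‖ ‖-R‖ := IsUltrametricDist.norm_add_le_max _ _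
      _ = max ‖∑' k, B k‖ ‖R‖ := by rw [norm_neg]
  have hge : ‖B k0‖ ≤ ‖∑' k, B k‖ :=
    (le_max_iff.1 hmax).resolve_right (not_le.2 hRlt)
  intro hzero
  rw [hkey] at hzero
  rw [hzero, norm_zero] at hge
  have hpos : 0 < ‖B k0‖ := by rw [hBk0norm]; positivity
  linarith

theorem zeros_finite (c : ℕ → Kv) (hc : Tendsto (fun n => ‖c n‖) atTop (nhds 0)) :
    (∀ x, gf p c x = 0) ∨ {x : ℤ_[p] | gf p c x = 0}.Finite := by
  classical
  by_cases hB : ∃ a : ℤ_[p], ∀ k, bco p c a k = 0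
  · left
    obtain ⟨a, ha⟩ := hB
    intro x
    have hx := gf_expand hiso c hc a (x - a)
    rw [add_sub_cancel] at hx
    rw [hx]
    simp [ha]
  · right
    push_neg at hB
    obtain ⟨L, hL0, hL⟩ := exists_L c hc
    by_contra hinf
    have hinf2 : {x : ℤ_[p] | gf p c x = 0}.Infinite := hinf
    set e := hinf2.natEmbedding with he'
    obtain ⟨a, -, σ, hσ, hconv⟩ :=
      isCompact_univ.tendsto_subseq (x := fun n => ((e n : {x : ℤ_[p] | gf p c x = 0}) : ℤ_[p]))
        (fun n => Set.mem_univ _)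
    obtain ⟨k0, hk0⟩ := hB a
    have hLb := fun k => norm_bco_le hiso c hL hL0.le a k
    have hex0 : ∃ k, bco p c a k ≠ 0 := ⟨k0, hk0⟩
    set k1 := Nat.find hex0 with hk1'
    have hk1 : bco p c a k1 ≠ 0 := Nat.find_spec hex0
    have hmin : ∀ k < k1, bco p c a k = 0 := fun k hk => by
      have := Nat.find_min hex0 hk
      simpa using this
    set ε := ‖bco p c a k1‖ / L with hε'
    have hε : 0 < ε := div_pos (norm_pos_iff.2 hk1) hL0
    have hisol := gf_isolated hiso c hc hL0 a hLb hk1 hmin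
    obtain ⟨N, hN⟩ := Metric.tendsto_atTop.1 hconv ε hε
    have h1 := hN N le_rfl
    have h2 := hN (N + 1) (by omega)
    have hneq : ((e (σ N) : {x : ℤ_[p] | gf p c x = 0}) : ℤ_[p]) ≠
        ((e (σ (N+1)) : {x : ℤ_[p] | gf p c x = 0}) : ℤ_[p]) := by
      intro hEq
      have := e.injective (Subtype.coe_injective hEq)
      exact absurd (hσ.injective this) (by omega)
    have hex : ∃ x : ℤ_[p], gf p c x = 0 ∧ x ≠ a ∧ dist x a < ε := by
      by_cases hxa : ((e (σ N) : {x : ℤ_[p] | gf p c x = 0}) : ℤ_[p]) = a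
      · refine ⟨_, (e (σ (N+1))).2, ?_, h2⟩
        rw [← hxa]
        exact fun hh => hneq hh.symm
      · exact ⟨_, (e (σ N)).2, hxa, h1⟩
    obtain ⟨x, hxz, hxa, hxd⟩ := hex
    have hgf := hisol (x - a) (sub_ne_zero.2 hxa)
      (by rw [← dist_eq_norm] at *; exact hxd)
    rw [add_sub_cancel] at hgf
    exact hgf hxz

end WithIso

/-- counting lemma -/
theorem count_close (p : ℕ) [Fact p.Prime] (z : ℤ_[p]) (i t : ℕ) (hit : i ≤ t)
    [DecidablePred fun j : ℕ => ‖(j : ℤ_[p]) - z‖ ≤ (p : ℝ) ^ (-(i : ℤ))] :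
    ((Finset.range (p ^ t)).filter
      (fun j : ℕ => ‖(j : ℤ_[p]) - z‖ ≤ (p : ℝ) ^ (-(i : ℤ)))).card ≤ p ^ (t - i) := by
  have hp : 0 < p ^ i := pow_pos (Fact.out (p := p.Prime)).pos i
  have hcard : (Finset.range (p ^ (t - i))).card = p ^ (t - i) := Finset.card_range _
  rw [← hcard]
  refine Finset.card_le_card_of_injOn (fun j => j / p ^ i) ?_ ?_
  · intro j hj
    rw [Finset.mem_coe, Finset.mem_filter, Finset.mem_range] at hj
    rw [Finset.mem_coe, Finset.mem_range, Nat.div_lt_iff_lt_mul hp, ← pow_add, Nat.sub_add_cancel hit]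
    exact hj.1
  · intro j1 h1 j2 h2 hdiv
    rw [Finset.mem_coe, Finset.mem_filter] at h1 h2
    have hnorm : ‖((j1 : ℤ_[p]) - (j2 : ℤ_[p]))‖ ≤ (p : ℝ) ^ (-(i : ℤ)) := by
      have he : (j1 : ℤ_[p]) - (j2 : ℤ_[p]) = ((j1 : ℤ_[p]) - z) + -((j2 : ℤ_[p]) - z) := by
        ring
      rw [he]
      refine (PadicInt.nonarchimedean _ _).trans (max_le h1.2 ?_)
      rw [norm_neg]
      exact h2.2
    have hdvd : ((p : ℤ) ^ i) ∣ ((j1 : ℤ) - (j2 : ℤ)) := by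
      have : ‖(((j1 : ℤ) - (j2 : ℤ) : ℤ) : ℤ_[p])‖ ≤ (p : ℝ) ^ (-(i : ℤ)) := by
        push_cast
        exact hnorm
      exact_mod_cast PadicInt.norm_int_le_pow_iff_dvd.1 this
    have hmod : j2 ≡ j1 [MOD p ^ i] := by
      rw [Nat.modEq_iff_dvd]
      push_cast
      exact hdvd
    have hmod' : j2 % p ^ i = j1 % p ^ i := hmod
    have hdiv' : j1 / p ^ i = j2 / p ^ i := by simpa using hdiv
    calc j1 = p ^ i * (j1 / p ^ i) + j1 % p ^ i := (Nat.div_add_mod j1 (p ^ i)).symm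
      _ = p ^ i * (j2 / p ^ i) + j2 % p ^ i := by rw [hdiv', hmod']
      _ = j2 := Nat.div_add_mod j2 (p ^ i)

end Aux

/-- let `Kv` be a finite extension of `ℚ_p` (ultrametric norm extending
`|·|_p`) and `g = Σ c_n x^n` a power series over `Kv` with `‖c n‖ → 0`, viewed as an
analytic function on `ℤ_p`. Then `f n = ‖g(n)‖` is constant on almost all congruence
classes: there are moduli `d 1 < d 2 < ⋯` and good sets `G i ⊆ {0, …, d i - 1}` with
`|G i| / d i → 1` such that `f` is constant on each class `j mod d i` with `j ∈ G i`. -/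
theorem norm_of_padic_analytic_almost_quasi_constant (p : ℕ) [Fact p.Prime]
    (Kv : Type*) [NontriviallyNormedField Kv] [NormedAlgebra ℚ_[p] Kv]
    [FiniteDimensional ℚ_[p] Kv] [IsUltrametricDist Kv]
    (hiso : ∀ x : ℚ_[p], ‖algebraMap ℚ_[p] Kv x‖ = ‖x‖)
    (c : ℕ → Kv) (hc : Tendsto (fun n => ‖c n‖) atTop (nhds 0)) :
    ∃ d : ℕ → ℕ, StrictMono d ∧ (∀ i, 0 < d i) ∧
      ∃ G : ℕ → Finset ℕ, (∀ i, G i ⊆ Finset.range (d i)) ∧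
        Tendsto (fun i => ((G i).card : ℝ) / (d i : ℝ)) atTop (nhds 1) ∧
        ∀ i, ∀ j ∈ G i, ∀ m n : ℕ, m % d i = j → n % d i = j →
          ‖∑' k : ℕ, c k * (algebraMap ℚ_[p] Kv ((m : ℤ_[p]) : ℚ_[p])) ^ k‖ =
          ‖∑' k : ℕ, c k * (algebraMap ℚ_[p] Kv ((n : ℤ_[p]) : ℚ_[p])) ^ k‖ := by
  classical
  have hp1 : 1 < p := (Fact.out (p := p.Prime)).one_lt
  have hp1R : (1:ℝ) < p := by exact_mod_cast hp1
  have hq0 : (0:ℝ) ≤ (p:ℝ)⁻¹ := by positivity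
  have hqlt : (p:ℝ)⁻¹ < 1 := inv_lt_one_of_one_lt₀ hp1R
  have hconvpow : ∀ a : ℕ, (p:ℝ) ^ (-(a:ℤ)) = ((p:ℝ)⁻¹) ^ a := fun a => by
    rw [zpow_neg, zpow_natCast, inv_pow]
  have hgoal_eq : ∀ q : ℕ,
      (∑' k : ℕ, c k * (algebraMap ℚ_[p] Kv ((q : ℤ_[p]) : ℚ_[p])) ^ k) = gf p c (q : ℤ_[p]) :=
    fun q => rfl
  rcases zeros_finite hiso c hc with hzero | hfin
  · refine ⟨fun i => i + 1, fun a b h => by dsimp only; omega, fun i => Nat.succ_pos i,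
      fun i => Finset.range (i + 1), fun i => Finset.Subset.refl _, ?_, ?_⟩
    · have he : (fun i : ℕ => ((Finset.range (i + 1)).card : ℝ) / ((i + 1 : ℕ) : ℝ))
          = fun _ : ℕ => (1:ℝ) := by
        funext i
        rw [Finset.card_range, div_self (by positivity)]
      rw [he]
      exact tendsto_const_nhds
    · intro i j hj m n hm hn
      rw [hgoal_eq m, hgoal_eq n, hzero, hzero]
  · obtain ⟨L, hL0, hL⟩ := exists_L c hc
    set Z := hfin.toFinset with hZ'
    have hmemZ : ∀ x : ℤ_[p], x ∈ Z ↔ gf p c x = 0 := fun x => hfin.mem_toFinset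
    have hcont : Continuous (gf p c) := by
      have hlip : LipschitzWith (Real.toNNReal L) (gf p c) := by
        refine LipschitzWith.of_dist_le_mul (fun x y => ?_)
        rw [dist_eq_norm, dist_eq_norm]
        calc ‖gf p c x - gf p c y‖ ≤ L * ‖x - y‖ := gf_lip hiso c hc hL hL0.le x y
          _ = (Real.toNNReal L : ℝ) * ‖x - y‖ := by rw [Real.coe_toNNReal L hL0.le]
      exact hlip.continuous
    have hKey : ∀ i : ℕ, ∃ δ : ℝ, 0 < δ ∧
        ∀ x : ℤ_[p], (∀ z ∈ Z, (p:ℝ) ^ (-(i:ℤ)) < ‖x - z‖) → δ ≤ ‖gf p c x‖ := by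
      intro i
      set K : Set ℤ_[p] := {x | ∀ z ∈ Z, (p:ℝ) ^ (-(i:ℤ)) < ‖x - z‖} with hK'
      rcases Set.eq_empty_or_nonempty K with hKe | hKne
      · refine ⟨1, one_pos, fun x hx => ?_⟩
        exfalso
        have hxK : x ∈ K := hx
        rw [hKe] at hxK
        exact hxK
      · have hKclosed : IsClosed K := by
          have hKeq : K = ⋂ z ∈ Z, (Metric.closedBall z ((p:ℝ) ^ (-(i:ℤ))))ᶜ := by
            ext x
            simp [hK', Metric.mem_closedBall, dist_eq_norm, not_le]
          rw [hKeq]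
          exact isClosed_biInter (fun z _ =>
            (IsUltrametricDist.isOpen_closedBall z (by positivity)).isClosed_compl)
        have hKcomp : IsCompact K := hKclosed.isCompact
        obtain ⟨x0, hx0K, hx0min⟩ := hKcomp.exists_isMinOn hKne hcont.norm.continuousOn
        refine ⟨‖gf p c x0‖, ?_, fun x hx => hx0min hx⟩
        have hx0ne : gf p c x0 ≠ 0 := by
          intro h0
          have hx0Z : x0 ∈ Z := (hmemZ x0).2 h0
          have hcontra := hx0K x0 hx0Z
          rw [sub_self, norm_zero] at hcontra
          exact absurd hcontra (not_lt.2 (by positivity))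
        exact norm_pos_iff.2 hx0ne
    choose δ hδpos hδ using hKey
    have htendq : Tendsto (fun t : ℕ => L * ((p:ℝ)⁻¹) ^ t) atTop (nhds 0) := by
      simpa using (tendsto_pow_atTop_nhds_zero_of_lt_one hq0 hqlt).const_mul L
    have hS : ∀ i : ℕ, ∃ s : ℕ, L * ((p:ℝ)⁻¹) ^ s < δ i := fun i =>
      (htendq.eventually (gt_mem_nhds (hδpos i))).exists
    choose s hs using hS
    set t : ℕ → ℕ := fun i => Nat.rec (s 0) (fun n tn => max (s (n+1)) (max (n+1) (tn+1))) i
      with ht'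
    have ht0 : t 0 = s 0 := rfl
    have htsucc : ∀ n, t (n+1) = max (s (n+1)) (max (n+1) (t n + 1)) := fun n => rfl
    have htmono : StrictMono t := strictMono_nat_of_lt_succ (fun n => by rw [htsucc]; omega)
    have hts : ∀ i, s i ≤ t i := by
      intro i
      cases i with
      | zero => rw [ht0]
      | succ n => rw [htsucc]; omega
    have hti : ∀ i, i ≤ t i := by
      intro i
      cases i with
      | zero => omega
      | succ n => rw [htsucc]; omega
    have htL : ∀ i, L * ((p:ℝ)⁻¹) ^ (t i) < δ i := by
      intro i
      refine lt_of_le_of_lt ?_ (hs i)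
      exact mul_le_mul_of_nonneg_left (pow_le_pow_of_le_one hq0 hqlt.le (hts i)) hL0.le
    set d : ℕ → ℕ := fun i => p ^ t i with hd'
    have hdpos : ∀ i, 0 < d i := fun i => pow_pos (by omega) _
    have hdmono : StrictMono d := fun a b h => Nat.pow_lt_pow_right hp1 (htmono h)
    set P : ℕ → ℕ → Prop := fun i j => ∀ z ∈ Z, (p:ℝ) ^ (-(i:ℤ)) < ‖(j : ℤ_[p]) - z‖ with hP'
    set G : ℕ → Finset ℕ := fun i => (Finset.range (d i)).filter (P i) with hG'
    -- distance facts
    have hdist : ∀ i : ℕ, ∀ q j : ℕ, j < d i → q % d i = j →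
        ‖(q : ℤ_[p]) - (j : ℤ_[p])‖ ≤ (p:ℝ) ^ (-(t i : ℤ)) := by
      intro i q j hjd hq
      have hmodeq : q ≡ j [MOD d i] := by
        rw [Nat.ModEq, hq, Nat.mod_eq_of_lt hjd]
      have hdvd : ((d i : ℤ)) ∣ (j : ℤ) - (q : ℤ) := (Nat.modEq_iff_dvd).1 hmodeq
      have hdvd2 : ((p:ℤ) ^ t i) ∣ ((q : ℤ) - (j : ℤ)) := by
        rw [hd'] at hdvd
        push_cast at hdvd
        exact (dvd_sub_comm).1 hdvd
      have hnorm := PadicInt.norm_int_le_pow_iff_dvd.2 hdvd2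
      push_cast at hnorm
      exact hnorm
    have hKmem : ∀ i : ℕ, ∀ j ∈ G i, ∀ q : ℕ, q % d i = j →
        ∀ z ∈ Z, (p:ℝ) ^ (-(i:ℤ)) < ‖(q : ℤ_[p]) - z‖ := by
      intro i j hj q hq z hz
      rw [hG', Finset.mem_filter, Finset.mem_range] at hj
      obtain ⟨hjd, hjz⟩ := hj
      have h1 := hdist i q j hjd hq
      have h2 := hjz z hz
      have hle : ‖(q : ℤ_[p]) - (j : ℤ_[p])‖ ≤ (p:ℝ) ^ (-(i:ℤ)) := by
        refine h1.trans ?_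
        rw [hconvpow, hconvpow]
        exact pow_le_pow_of_le_one hq0 hqlt.le (hti i)
      have htri : ‖(j:ℤ_[p]) - z‖ ≤ max ‖(q:ℤ_[p]) - z‖ ‖(q:ℤ_[p]) - (j:ℤ_[p])‖ := by
        have he : (j:ℤ_[p]) - z = ((q:ℤ_[p]) - z) + -((q:ℤ_[p]) - (j:ℤ_[p])) := by ring
        calc ‖(j:ℤ_[p]) - z‖ = ‖((q:ℤ_[p]) - z) + -((q:ℤ_[p]) - (j:ℤ_[p]))‖ := by rw [← he]
          _ ≤ max ‖(q:ℤ_[p]) - z‖ ‖-((q:ℤ_[p]) - (j:ℤ_[p]))‖ := PadicInt.nonarchimedean _ _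
          _ = max ‖(q:ℤ_[p]) - z‖ ‖(q:ℤ_[p]) - (j:ℤ_[p])‖ := by rw [norm_neg]
      rcases le_max_iff.1 htri with hcase | hcase
      · exact lt_of_lt_of_le h2 hcase
      · exact absurd (lt_of_lt_of_le h2 (hcase.trans hle)) (lt_irrefl _)
    refine ⟨d, hdmono, hdpos, G, fun i => Finset.filter_subset _ _, ?_, ?_⟩
    · -- density
      have hup : ∀ i : ℕ, ((G i).card : ℝ) / (d i : ℝ) ≤ 1 := by
        intro i
        have hdR : (0:ℝ) < (d i : ℝ) := by exact_mod_cast hdpos i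
        rw [div_le_one hdR]
        have := Finset.card_le_card (Finset.filter_subset (P i) (Finset.range (d i)))
        rw [Finset.card_range] at this
        exact_mod_cast this
      have hlow : ∀ i : ℕ, 1 - (Z.card : ℝ) * ((p:ℝ)⁻¹) ^ i ≤ ((G i).card : ℝ) / (d i : ℝ) := by
        intro i
        have hdR : (0:ℝ) < (d i : ℝ) := by exact_mod_cast hdpos i
        rw [le_div_iff₀ hdR]
        have hsplit := Finset.card_filter_add_card_filter_not
          (s := Finset.range (d i)) (p := P i)
        rw [Finset.card_range] at hsplit
        have hbad : (Finset.range (d i)).filter (fun j => ¬ P i j) ⊆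
            Z.biUnion (fun z => (Finset.range (d i)).filter
              (fun j : ℕ => ‖(j : ℤ_[p]) - z‖ ≤ (p:ℝ) ^ (-(i:ℤ)))) := by
          intro j hj
          rw [Finset.mem_filter] at hj
          obtain ⟨hj1, hj2⟩ := hj
          simp only [hP', not_forall, not_lt] at hj2
          obtain ⟨z, hz, hle⟩ := hj2
          exact Finset.mem_biUnion.2 ⟨z, hz, Finset.mem_filter.2 ⟨hj1, hle⟩⟩
        have hbadcard : ((Finset.range (d i)).filter (fun j => ¬ P i j)).card ≤
            Z.card * p ^ (t i - i) := by
          refine (Finset.card_le_card hbad).trans (Finset.card_biUnion_le.trans ?_)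
          refine (Finset.sum_le_card_nsmul _ _ (p ^ (t i - i))
            (fun z _ => count_close p z i (t i) (hti i))).trans ?_
          rw [smul_eq_mul]
        have hqd : ((p:ℝ)⁻¹) ^ i * (d i : ℝ) = (p:ℝ) ^ (t i - i) := by
          have hde : (d i : ℝ) = (p:ℝ) ^ (t i) := by rw [hd']; push_cast; ring
          have hsplit2 : (p:ℝ) ^ (t i) = (p:ℝ) ^ (t i - i) * (p:ℝ) ^ i := by
            rw [← pow_add, Nat.sub_add_cancel (hti i)]
          rw [hde, hsplit2, inv_pow, mul_comm ((p:ℝ) ^ (t i - i)) ((p:ℝ) ^ i), ← mul_assoc,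
            inv_mul_cancel₀ (by positivity), one_mul]
        have hsplit' : (G i).card + ((Finset.range (d i)).filter (fun j => ¬ P i j)).card
            = d i := by rw [hG']; exact hsplit
        have hcards : ((G i).card : ℝ) +
            (((Finset.range (d i)).filter (fun j => ¬ P i j)).card : ℝ) = (d i : ℝ) := by
          exact_mod_cast hsplit'
        have hcast2 : (((Finset.range (d i)).filter (fun j => ¬ P i j)).card : ℝ) ≤
            (Z.card : ℝ) * (p:ℝ) ^ (t i - i) := by exact_mod_cast hbadcard
        nlinarith [hqd, hcards, hcast2]
      refine tendsto_of_tendsto_of_tendsto_of_le_of_le ?_ tendsto_const_nhds hlow hup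
      have := ((tendsto_pow_atTop_nhds_zero_of_lt_one hq0 hqlt).const_mul
        ((Z.card : ℝ))).const_sub 1
      simpa using this
    · -- constancy
      intro i j hj m n hm hn
      have hδm : δ i ≤ ‖gf p c (m:ℤ_[p])‖ := hδ i _ (hKmem i j hj m hm)
      have hδn : δ i ≤ ‖gf p c (n:ℤ_[p])‖ := hδ i _ (hKmem i j hj n hn)
      have hjd : j < d i := Finset.mem_range.1 (Finset.filter_subset _ _ hj)
      have hdiff : ‖gf p c (m:ℤ_[p]) - gf p c (n:ℤ_[p])‖ < δ i := by
        have h3 : ‖(m:ℤ_[p]) - (n:ℤ_[p])‖ ≤ (p:ℝ) ^ (-(t i:ℤ)) := by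
          have h4 := hdist i m j hjd hm
          have h5 := hdist i n j hjd hn
          have he : (m:ℤ_[p]) - (n:ℤ_[p]) =
              ((m:ℤ_[p]) - (j:ℤ_[p])) + -((n:ℤ_[p]) - (j:ℤ_[p])) := by ring
          calc ‖(m:ℤ_[p]) - (n:ℤ_[p])‖
              = ‖((m:ℤ_[p]) - (j:ℤ_[p])) + -((n:ℤ_[p]) - (j:ℤ_[p]))‖ := by rw [← he]
            _ ≤ max ‖(m:ℤ_[p]) - (j:ℤ_[p])‖ ‖-((n:ℤ_[p]) - (j:ℤ_[p]))‖ :=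
              PadicInt.nonarchimedean _ _
            _ = max ‖(m:ℤ_[p]) - (j:ℤ_[p])‖ ‖(n:ℤ_[p]) - (j:ℤ_[p])‖ := by rw [norm_neg]
            _ ≤ (p:ℝ) ^ (-(t i:ℤ)) := max_le h4 h5
        calc ‖gf p c (m:ℤ_[p]) - gf p c (n:ℤ_[p])‖
            ≤ L * ‖(m:ℤ_[p]) - (n:ℤ_[p])‖ := gf_lip hiso c hc hL hL0.le _ _
          _ ≤ L * (p:ℝ) ^ (-(t i:ℤ)) := mul_le_mul_of_nonneg_left h3 hL0.le
          _ = L * ((p:ℝ)⁻¹) ^ (t i) := by rw [hconvpow]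
          _ < δ i := htL i
      have heq : ‖gf p c (m:ℤ_[p])‖ = ‖gf p c (n:ℤ_[p])‖ := by
        by_contra hne
        rcases lt_or_gt_of_ne hne with hlt | hlt
        · have hmax : ‖gf p c (n:ℤ_[p])‖ ≤
              max ‖gf p c (m:ℤ_[p])‖ ‖gf p c (m:ℤ_[p]) - gf p c (n:ℤ_[p])‖ := by
            have he2 : gf p c (n:ℤ_[p]) =
                gf p c (m:ℤ_[p]) + -(gf p c (m:ℤ_[p]) - gf p c (n:ℤ_[p])) := by ring
            calc ‖gf p c (n:ℤ_[p])‖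
                = ‖gf p c (m:ℤ_[p]) + -(gf p c (m:ℤ_[p]) - gf p c (n:ℤ_[p]))‖ := by rw [← he2]
              _ ≤ _ := (IsUltrametricDist.norm_add_le_max _ _).trans (by rw [norm_neg])
          rcases le_max_iff.1 hmax with h6 | h6
          · linarith
          · linarith
        · have hmax : ‖gf p c (m:ℤ_[p])‖ ≤
              max ‖gf p c (n:ℤ_[p])‖ ‖gf p c (m:ℤ_[p]) - gf p c (n:ℤ_[p])‖ := by
            have he2 : gf p c (m:ℤ_[p]) =
                gf p c (n:ℤ_[p]) + (gf p c (m:ℤ_[p]) - gf p c (n:ℤ_[p])) := by ring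
            calc ‖gf p c (m:ℤ_[p])‖
                = ‖gf p c (n:ℤ_[p]) + (gf p c (m:ℤ_[p]) - gf p c (n:ℤ_[p]))‖ := by rw [← he2]
              _ ≤ _ := IsUltrametricDist.norm_add_le_max _ _
          rcases le_max_iff.1 hmax with h6 | h6
          · linarith
          · linarith
      exact heq
end

section
/- With f as in the previous construction (f(n) = s_k on the class 2^{k−1} − 1 mod 2^k, s_1 = 1, log|s_k| = o(2^k)) and a_n = 2^n + (−2)^n + 1, the power series Σ_{n≥0} f(n) a_n x^n has radius of convergence 1/2, equals 2/(1 − 4x²) + 1/(1 − x²) + Σ_{odd n} f(n) x^n, and the series Σ_{odd n} f(n) x^n has radius of convergence 1. Consequently Σ f(n) a_n x^n extends analytically beyond the circle of radius 1/2. -/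
open Filter Metric

lemma key_mod (n : ℕ) :
    n % 2 ^ (padicValNat 2 (n + 1) + 1) = 2 ^ (padicValNat 2 (n + 1)) - 1 ∧
    2 ^ (padicValNat 2 (n + 1) + 1) ≤ 2 * (n + 1) := by
  set v := padicValNat 2 (n + 1) with hv
  have hdvd : 2 ^ v ∣ n + 1 := pow_padicValNat_dvd
  have hndvd : ¬ 2 ^ (v + 1) ∣ n + 1 := pow_succ_padicValNat_not_dvd n.succ_ne_zero
  obtain ⟨m, hm⟩ := hdvd
  have hmodd : m % 2 = 1 := by
    rcases Nat.mod_two_eq_zero_or_one m with h | h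
    · exfalso
      obtain ⟨t, rfl⟩ := (Nat.dvd_iff_mod_eq_zero.2 h)
      exact hndvd ⟨t, by rw [hm]; ring⟩
    · exact h
  have h1 : (n + 1) % 2 ^ (v + 1) = 2 ^ v := by
    rw [hm, pow_succ, Nat.mul_mod_mul_left, hmodd, mul_one]
  have hpos : 1 ≤ 2 ^ v := Nat.one_le_two_pow
  have hsucc : 2 ^ (v + 1) = 2 ^ v * 2 := pow_succ 2 v
  constructor
  · have hdm := Nat.div_add_mod (n + 1) (2 ^ (v + 1))
    rw [h1] at hdm
    have hn : n = 2 ^ (v + 1) * ((n + 1) / 2 ^ (v + 1)) + (2 ^ v - 1) := by omega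
    rw [hn, Nat.mul_add_mod]
    exact Nat.mod_eq_of_lt (by omega)
  · have : 2 ^ v ≤ n + 1 := Nat.le_of_dvd n.succ_pos ⟨m, hm⟩
    omega

/-- with `f` as in the construction of Remark 2.12 (given by `s k` on the
class `2^(k-1) - 1 mod 2^k`) and `a n = 2^n + (-2)^n + 1`, the series `Σ f(n) a_n x^n`
has radius of convergence `1/2`, equals `2/(1-4x²) + 1/(1-x²) + Σ_{odd n} f(n) x^n` on
the disk of radius `1/2`, the odd-part series has radius of convergence `1`, and
consequently `Σ f(n) a_n x^n` extends analytically beyond the circle of radius `1/2`. -/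
theorem perturbed_series_not_natural_boundary (s : ℕ → ℤ)
    (hs0 : ∀ k, 1 ≤ k → s k ≠ 0) (hs1 : s 1 = 1)
    (hgrowth : (fun k : ℕ => Real.log |(s k : ℝ)|) =o[atTop] fun k : ℕ => (2 : ℝ) ^ k)
    (f : ℕ → ℤ)
    (hf : ∀ n k : ℕ, 1 ≤ k → n % 2 ^ k = 2 ^ (k - 1) - 1 → f n = s k)
    (a : ℕ → ℂ) (ha : ∀ n, a n = 2 ^ n + (-2 : ℂ) ^ n + 1) :
    ((∀ x : ℂ, ‖x‖ < 1 / 2 → Summable fun n : ℕ => (f n : ℂ) * a n * x ^ n) ∧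
      (∀ x : ℂ, 1 / 2 < ‖x‖ → ¬Summable fun n : ℕ => (f n : ℂ) * a n * x ^ n)) ∧
    (∀ x : ℂ, ‖x‖ < 1 / 2 →
      ∑' n : ℕ, (f n : ℂ) * a n * x ^ n =
        2 / (1 - 4 * x ^ 2) + 1 / (1 - x ^ 2) +
          ∑' m : ℕ, (f (2 * m + 1) : ℂ) * x ^ (2 * m + 1)) ∧
    ((∀ x : ℂ, ‖x‖ < 1 → Summable fun m : ℕ => (f (2 * m + 1) : ℂ) * x ^ (2 * m + 1)) ∧
      (∀ x : ℂ, 1 < ‖x‖ → ¬Summable fun m : ℕ => (f (2 * m + 1) : ℂ) * x ^ (2 * m + 1))) ∧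
    (∃ U : Set ℂ, IsOpen U ∧ ball (0 : ℂ) (1 / 2) ⊆ U ∧ (∃ z ∈ U, ‖z‖ = 1 / 2) ∧
      ∃ F : ℂ → ℂ, AnalyticOnNhd ℂ F U ∧
        ∀ x ∈ ball (0 : ℂ) (1 / 2), F x = ∑' n : ℕ, (f n : ℂ) * a n * x ^ n) := by
  -- `f n = s (v₂(n+1)+1)`
  have hfk : ∀ n, f n = s (padicValNat 2 (n + 1) + 1) := fun n =>
    hf n _ (Nat.le_add_left 1 _) (by simpa using (key_mod n).1)
  -- lower bound
  have habs : ∀ n, (1 : ℝ) ≤ |(f n : ℝ)| := by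
    intro n
    rw [hfk n]
    have := Int.one_le_abs (hs0 (padicValNat 2 (n + 1) + 1) (Nat.le_add_left 1 _))
    calc (1 : ℝ) = ((1 : ℤ) : ℝ) := by norm_num
    _ ≤ ((|s (padicValNat 2 (n + 1) + 1)| : ℤ) : ℝ) := by exact_mod_cast this
    _ = |(s (padicValNat 2 (n + 1) + 1) : ℝ)| := by push_cast; ring
  -- f is 1 on evens
  have hfe : ∀ m, f (2 * m) = 1 := by
    intro m
    rw [hf (2 * m) 1 le_rfl (by simp [Nat.mul_mod_right]), hs1]
  -- a on evens and odds
  have hae : ∀ m, a (2 * m) = 2 * 4 ^ m + 1 := by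
    intro m
    rw [ha, Even.neg_pow (even_two_mul m), pow_mul]
    norm_num
    ring
  have hao : ∀ m, a (2 * m + 1) = 1 := by
    intro m
    rw [ha, Odd.neg_pow (odd_two_mul_add_one m)]
    ring
  -- growth bound
  have hbound : ∀ ε : ℝ, 0 < ε → ∃ C : ℝ, 1 ≤ C ∧
      ∀ n, |(f n : ℝ)| ≤ C * Real.exp (ε * (n + 1)) := by
    intro ε hε
    have hb := (hgrowth.def (by positivity : (0:ℝ) < ε / 2))
    rw [Filter.eventually_atTop] at hb
    obtain ⟨K, hK⟩ := hb
    refine ⟨1 + ∑ k ∈ Finset.range K, |(s k : ℝ)|, ?_, ?_⟩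
    · have : 0 ≤ ∑ k ∈ Finset.range K, |(s k : ℝ)| :=
        Finset.sum_nonneg fun k _ => abs_nonneg _
      linarith
    · intro n
      set C := 1 + ∑ k ∈ Finset.range K, |(s k : ℝ)| with hC
      have hC1 : 1 ≤ C := by
        have : 0 ≤ ∑ k ∈ Finset.range K, |(s k : ℝ)| :=
          Finset.sum_nonneg fun k _ => abs_nonneg _
        linarith
      have hexp1 : 1 ≤ Real.exp (ε * (n + 1)) := Real.one_le_exp (by positivity)
      set k := padicValNat 2 (n + 1) + 1 with hk
      rw [hfk n]
      rcases lt_or_ge k K with hkK | hkK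
      · calc |(s k : ℝ)| ≤ ∑ j ∈ Finset.range K, |(s j : ℝ)| :=
            Finset.single_le_sum (f := fun j => |(s j : ℝ)|) (fun j _ => abs_nonneg _) (Finset.mem_range.2 hkK)
        _ ≤ C := by rw [hC]; linarith
        _ ≤ C * Real.exp (ε * (n + 1)) := le_mul_of_one_le_right (by linarith) hexp1
      · have hlog : Real.log |(s k : ℝ)| ≤ ε / 2 * 2 ^ k := by
          have := hK k hkK
          simp only [Real.norm_eq_abs] at this
          have h2 : |(2:ℝ) ^ k| = 2 ^ k := abs_of_pos (by positivity)
          rw [h2] at this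
          exact (le_abs_self _).trans this
        have h2k : (2 : ℝ) ^ k ≤ 2 * (n + 1) := by
          have := (key_mod n).2
          calc (2 : ℝ) ^ k = ((2 ^ k : ℕ) : ℝ) := by push_cast; ring
          _ ≤ ((2 * (n + 1) : ℕ) : ℝ) := by exact_mod_cast this
          _ = 2 * (n + 1) := by push_cast; ring
        have hpos : (0 : ℝ) < |(s k : ℝ)| := by
          have := habs n
          rw [hfk n] at this
          linarith
        calc |(s k : ℝ)| = Real.exp (Real.log |(s k : ℝ)|) := (Real.exp_log hpos).symm
        _ ≤ Real.exp (ε * (n + 1)) := by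
            apply Real.exp_le_exp.2
            calc Real.log |(s k : ℝ)| ≤ ε / 2 * 2 ^ k := hlog
            _ ≤ ε / 2 * (2 * (n + 1)) := by
                apply mul_le_mul_of_nonneg_left h2k (by positivity)
            _ = ε * (n + 1) := by ring
        _ ≤ C * Real.exp (ε * (n + 1)) := le_mul_of_one_le_left (by positivity) hC1
  -- summability of |f n| r^n for 0 ≤ r < 1
  have hsum : ∀ r : ℝ, 0 ≤ r → r < 1 → Summable fun n : ℕ => |(f n : ℝ)| * r ^ n := by
    have hpos : ∀ r : ℝ, 0 < r → r < 1 → Summable fun n : ℕ => |(f n : ℝ)| * r ^ n := by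
      intro r hr0 hr1
      set ε := Real.log (1 / r) / 2 with hεdef
      have hlogpos : 0 < Real.log (1 / r) := Real.log_pos ((one_lt_div hr0).2 hr1)
      have hε : 0 < ε := by positivity
      obtain ⟨C, hC1, hCb⟩ := hbound ε hε
      have hq : Real.exp ε * r < 1 := by
        have h1 : Real.exp ε < 1 / r := by
          rw [← Real.exp_log (by positivity : (0:ℝ) < 1 / r)]
          exact Real.exp_lt_exp.2 (by rw [hεdef]; linarith)
        calc Real.exp ε * r < (1 / r) * r := mul_lt_mul_of_pos_right h1 hr0
        _ = 1 := by field_simp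
      have hle : ∀ n : ℕ, |(f n : ℝ)| * r ^ n ≤ (C * Real.exp ε) * (Real.exp ε * r) ^ n := by
        intro n
        have hexp : Real.exp (ε * (n + 1)) = Real.exp ε ^ n * Real.exp ε := by
          rw [← Real.exp_nat_mul, ← Real.exp_add]
          congr 1
          push_cast
          ring
        calc |(f n : ℝ)| * r ^ n ≤ C * Real.exp (ε * (n + 1)) * r ^ n :=
            mul_le_mul_of_nonneg_right (hCb n) (pow_nonneg hr0.le n)
        _ = (C * Real.exp ε) * (Real.exp ε * r) ^ n := by rw [hexp, mul_pow]; ring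
      exact Summable.of_nonneg_of_le (fun n => by positivity) hle
        ((summable_geometric_of_lt_one (by positivity) hq).mul_left _)
    intro r hr0 hr1
    set r' := max r (1 / 2) with hr'
    have h0 : 0 < r' := lt_of_lt_of_le (by norm_num) (le_max_right _ _)
    have h1 : r' < 1 := max_lt hr1 (by norm_num)
    have hle : ∀ n : ℕ, |(f n : ℝ)| * r ^ n ≤ |(f n : ℝ)| * r' ^ n := fun n =>
      mul_le_mul_of_nonneg_left (pow_le_pow_left₀ hr0 (le_max_left _ _) n) (abs_nonneg _)
    exact Summable.of_nonneg_of_le (fun n => by positivity) hle (hpos r' h0 h1)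
  -- norms
  have hnormf : ∀ n, ‖((f n : ℂ))‖ = |(f n : ℝ)| := by
    intro n
    rw [show ((f n : ℂ)) = (((f n : ℝ)) : ℂ) by push_cast; ring, Complex.norm_real,
      Real.norm_eq_abs]
  have hna : ∀ n, ‖a n‖ ≤ 3 * 2 ^ n := by
    intro n
    rw [ha]
    have h2 : ‖(2:ℂ)‖ = 2 := by norm_num
    calc ‖(2:ℂ) ^ n + (-2) ^ n + 1‖ ≤ ‖(2:ℂ) ^ n‖ + ‖((-2):ℂ) ^ n‖ + ‖(1:ℂ)‖ :=
        norm_add₃_le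
    _ = 2 ^ n + 2 ^ n + 1 := by
        rw [norm_pow, norm_pow, norm_neg, h2, norm_one]
    _ ≤ 3 * 2 ^ n := by
        have : (1:ℝ) ≤ 2 ^ n := one_le_pow₀ (by norm_num)
        linarith
  -- Part 1a
  have part1a : ∀ x : ℂ, ‖x‖ < 1 / 2 → Summable fun n : ℕ => (f n : ℂ) * a n * x ^ n := by
    intro x hx
    apply Summable.of_norm
    have hle : ∀ n : ℕ, ‖(f n : ℂ) * a n * x ^ n‖ ≤ 3 * (|(f n : ℝ)| * (2 * ‖x‖) ^ n) := by
      intro n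
      calc ‖(f n : ℂ) * a n * x ^ n‖ = |(f n : ℝ)| * ‖a n‖ * ‖x‖ ^ n := by
            rw [norm_mul, norm_mul, norm_pow, hnormf]
      _ ≤ |(f n : ℝ)| * (3 * 2 ^ n) * ‖x‖ ^ n :=
          mul_le_mul_of_nonneg_right
            (mul_le_mul_of_nonneg_left (hna n) (abs_nonneg _))
            (pow_nonneg (norm_nonneg _) n)
      _ = 3 * (|(f n : ℝ)| * (2 * ‖x‖) ^ n) := by rw [mul_pow]; ring
    exact Summable.of_nonneg_of_le (fun n => norm_nonneg _) hle
      ((hsum (2 * ‖x‖) (by positivity) (by linarith)).mul_left 3)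
  -- Part 1b
  have part1b : ∀ x : ℂ, 1 / 2 < ‖x‖ →
      ¬Summable fun n : ℕ => (f n : ℂ) * a n * x ^ n := by
    intro x hx hS
    have h0 : Filter.Tendsto (fun n : ℕ => ‖(f n : ℂ) * a n * x ^ n‖) atTop (nhds 0) := by
      simpa using hS.tendsto_atTop_zero.norm
    have h2m : Filter.Tendsto (fun m : ℕ => 2 * m) atTop atTop :=
      Filter.tendsto_atTop_mono (fun m => by simp only [id_eq]; omega) Filter.tendsto_id
    have h0' := h0.comp h2m
    have hev := h0'.eventually_lt_const (by norm_num : (0:ℝ) < 1)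
    obtain ⟨m, hm⟩ := hev.exists
    apply absurd hm
    push_neg
    have hax : a (2 * m) = (((2 * 4 ^ m + 1 : ℝ)) : ℂ) := by rw [hae]; push_cast; ring
    have : ‖(f (2 * m) : ℂ) * a (2 * m) * x ^ (2 * m)‖
        = (2 * 4 ^ m + 1) * ‖x‖ ^ (2 * m) := by
      rw [hfe, hax, show ((1:ℤ):ℂ) = 1 by norm_num, one_mul, norm_mul, norm_pow,
        Complex.norm_real, Real.norm_eq_abs,
        abs_of_pos (by positivity : (0:ℝ) < 2 * 4 ^ m + 1)]
    simp only [Function.comp]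
    rw [this]
    have hb : (1 : ℝ) ≤ 4 * ‖x‖ ^ 2 := by nlinarith [norm_nonneg x]
    calc (1:ℝ) ≤ (4 * ‖x‖ ^ 2) ^ m := one_le_pow₀ hb
    _ = 4 ^ m * ‖x‖ ^ (2 * m) := by rw [mul_pow, ← pow_mul]
    _ ≤ (2 * 4 ^ m + 1) * ‖x‖ ^ (2 * m) := by
        apply mul_le_mul_of_nonneg_right _ (pow_nonneg (norm_nonneg _) _)
        nlinarith [pow_nonneg (by norm_num : (0:ℝ) ≤ 4) m]
  -- Part 3a
  have part3a : ∀ x : ℂ, ‖x‖ < 1 →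
      Summable fun m : ℕ => (f (2 * m + 1) : ℂ) * x ^ (2 * m + 1) := by
    intro x hx
    apply Summable.of_norm
    set r' := max ‖x‖ (1 / 2) with hr'
    have h0 : (0:ℝ) ≤ r' := le_trans (by norm_num) (le_max_right _ _)
    have h1 : r' < 1 := max_lt hx (by norm_num)
    have hle : ∀ m : ℕ, ‖(f (2 * m + 1) : ℂ) * x ^ (2 * m + 1)‖
        ≤ |(f (2 * m + 1) : ℝ)| * r' ^ (2 * m + 1) := by
      intro m
      rw [norm_mul, norm_pow, hnormf]
      exact mul_le_mul_of_nonneg_left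
        (pow_le_pow_left₀ (norm_nonneg _) (le_max_left _ _) _) (abs_nonneg _)
    exact Summable.of_nonneg_of_le (fun m => norm_nonneg _) hle
      ((hsum r' h0 h1).comp_injective (fun p q h => by omega))
  -- Part 3b
  have part3b : ∀ x : ℂ, 1 < ‖x‖ →
      ¬Summable fun m : ℕ => (f (2 * m + 1) : ℂ) * x ^ (2 * m + 1) := by
    intro x hx hS
    have h0 : Filter.Tendsto (fun m : ℕ => ‖(f (2 * m + 1) : ℂ) * x ^ (2 * m + 1)‖)
        atTop (nhds 0) := by simpa using hS.tendsto_atTop_zero.norm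
    obtain ⟨m, hm⟩ := (h0.eventually_lt_const (by norm_num : (0:ℝ) < 1)).exists
    apply absurd hm
    push_neg
    rw [norm_mul, norm_pow, hnormf]
    calc (1:ℝ) = 1 * 1 := by ring
    _ ≤ |(f (2 * m + 1) : ℝ)| * ‖x‖ ^ (2 * m + 1) :=
        mul_le_mul (habs _) (one_le_pow₀ hx.le) (by norm_num) (abs_nonneg _)
  -- Part 2
  have part2 : ∀ x : ℂ, ‖x‖ < 1 / 2 →
      ∑' n : ℕ, (f n : ℂ) * a n * x ^ n =
        2 / (1 - 4 * x ^ 2) + 1 / (1 - x ^ 2) +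
          ∑' m : ℕ, (f (2 * m + 1) : ℂ) * x ^ (2 * m + 1) := by
    intro x hx
    have hS := part1a x hx
    have hE : Summable fun k : ℕ => (f (2 * k) : ℂ) * a (2 * k) * x ^ (2 * k) :=
      hS.comp_injective (fun p q h => by omega)
    have hO : Summable fun k : ℕ => (f (2 * k + 1) : ℂ) * a (2 * k + 1) * x ^ (2 * k + 1) :=
      hS.comp_injective (fun p q h => by omega)
    have h4x : ‖4 * x ^ 2‖ < 1 := by
      rw [norm_mul, norm_pow]
      have h4 : ‖(4:ℂ)‖ = 4 := by norm_num
      rw [h4]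
      nlinarith [norm_nonneg x]
    have hx2 : ‖x ^ 2‖ < 1 := by
      rw [norm_pow]
      nlinarith [norm_nonneg x]
    have he : ∀ k, (f (2 * k) : ℂ) * a (2 * k) * x ^ (2 * k)
        = 2 * (4 * x ^ 2) ^ k + (x ^ 2) ^ k := by
      intro k
      rw [hfe, hae]
      push_cast
      ring
    have ho : ∀ k, (f (2 * k + 1) : ℂ) * a (2 * k + 1) * x ^ (2 * k + 1)
        = (f (2 * k + 1) : ℂ) * x ^ (2 * k + 1) := by
      intro k
      rw [hao, mul_one]
    calc ∑' n : ℕ, (f n : ℂ) * a n * x ^ n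
        = (∑' k : ℕ, (f (2 * k) : ℂ) * a (2 * k) * x ^ (2 * k))
          + ∑' k : ℕ, (f (2 * k + 1) : ℂ) * a (2 * k + 1) * x ^ (2 * k + 1) :=
        (tsum_even_add_odd (f := fun n : ℕ => (f n : ℂ) * a n * x ^ n) hE hO).symm
    _ = (∑' k : ℕ, (2 * (4 * x ^ 2) ^ k + (x ^ 2) ^ k))
          + ∑' k : ℕ, (f (2 * k + 1) : ℂ) * x ^ (2 * k + 1) := by
        rw [tsum_congr he, tsum_congr ho]
    _ = 2 / (1 - 4 * x ^ 2) + 1 / (1 - x ^ 2)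
          + ∑' m : ℕ, (f (2 * m + 1) : ℂ) * x ^ (2 * m + 1) := by
        rw [Summable.tsum_add ((summable_geometric_of_norm_lt_one h4x).mul_left 2)
          (summable_geometric_of_norm_lt_one hx2), tsum_mul_left,
          tsum_geometric_of_norm_lt_one h4x, tsum_geometric_of_norm_lt_one hx2,
          div_eq_mul_inv, one_div]
  -- the power series for the odd part
  set c : ℕ → ℂ := fun n => if n % 2 = 1 then (f n : ℂ) else 0 with hc
  have hnormc : ∀ n, ‖c n‖ ≤ |(f n : ℝ)| := by
    intro n
    simp only [hc]
    by_cases h : n % 2 = 1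
    · rw [if_pos h, hnormf]
    · rw [if_neg h, norm_zero]; linarith [habs n]
  have hrad : 1 ≤ (FormalMultilinearSeries.ofScalars ℂ c).radius := by
    apply ENNReal.le_of_forall_nnreal_lt
    intro r hr
    apply FormalMultilinearSeries.le_radius_of_summable_norm
    have hr1 : (r : ℝ) < 1 := by exact_mod_cast hr
    have hle : ∀ n : ℕ, ‖FormalMultilinearSeries.ofScalars ℂ c n‖ * (r : ℝ) ^ n
        ≤ |(f n : ℝ)| * (r : ℝ) ^ n := by
      intro n
      rw [FormalMultilinearSeries.ofScalars_norm]
      exact mul_le_mul_of_nonneg_right (hnormc n) (pow_nonneg r.coe_nonneg n)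
    exact Summable.of_nonneg_of_le (fun n => by positivity) hle (hsum r r.coe_nonneg hr1)
  have hgsum : ∀ y : ℂ, ‖y‖ < 1 →
      HasSum (fun n => c n * y ^ n) (∑' m : ℕ, (f (2 * m + 1) : ℂ) * y ^ (2 * m + 1)) := by
    intro y hy
    have hS : Summable fun n : ℕ => c n * y ^ n := by
      apply Summable.of_norm
      set r' := max ‖y‖ (1 / 2) with hr'
      have hle : ∀ n : ℕ, ‖c n * y ^ n‖ ≤ |(f n : ℝ)| * r' ^ n := by
        intro n
        rw [norm_mul, norm_pow]
        exact mul_le_mul (hnormc n)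
          (pow_le_pow_left₀ (norm_nonneg _) (le_max_left _ _) _)
          (pow_nonneg (norm_nonneg _) _) (abs_nonneg _)
      exact Summable.of_nonneg_of_le (fun n => norm_nonneg _) hle
        (hsum r' (le_trans (by norm_num) (le_max_right _ _)) (max_lt hy (by norm_num)))
    have hE : Summable fun k : ℕ => c (2 * k) * y ^ (2 * k) :=
      hS.comp_injective (fun p q h => by omega)
    have hO : Summable fun k : ℕ => c (2 * k + 1) * y ^ (2 * k + 1) :=
      hS.comp_injective (fun p q h => by omega)
    have hce : ∀ k, c (2 * k) * y ^ (2 * k) = 0 := by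
      intro k
      simp only [hc]
      simp [Nat.mul_mod_right]
    have hco : ∀ k, c (2 * k + 1) * y ^ (2 * k + 1) = (f (2 * k + 1) : ℂ) * y ^ (2 * k + 1) := by
      intro k
      simp only [hc]
      rw [if_pos (by omega : (2 * k + 1) % 2 = 1)]
    have heq : ∑' n : ℕ, c n * y ^ n = ∑' m : ℕ, (f (2 * m + 1) : ℂ) * y ^ (2 * m + 1) := by
      calc ∑' n : ℕ, c n * y ^ n
          = (∑' k : ℕ, c (2 * k) * y ^ (2 * k)) + ∑' k : ℕ, c (2 * k + 1) * y ^ (2 * k + 1) :=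
          (tsum_even_add_odd (f := fun n : ℕ => c n * y ^ n) hE hO).symm
      _ = 0 + ∑' m : ℕ, (f (2 * m + 1) : ℂ) * y ^ (2 * m + 1) := by
          rw [tsum_congr hce, tsum_zero, tsum_congr hco]
      _ = ∑' m : ℕ, (f (2 * m + 1) : ℂ) * y ^ (2 * m + 1) := zero_add _
    exact heq ▸ hS.hasSum
  have hg : HasFPowerSeriesOnBall (fun z : ℂ => ∑' m : ℕ, (f (2 * m + 1) : ℂ) * z ^ (2 * m + 1))
      (FormalMultilinearSeries.ofScalars ℂ c) 0 1 := by
    refine ⟨hrad, one_pos, ?_⟩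
    intro y hy
    rw [zero_add]
    have hy' : ‖y‖ < 1 := by
      rw [mem_emetric_ball_zero_iff, enorm_eq_nnnorm] at hy
      exact_mod_cast hy
    have := hgsum y hy'
    have hco : ∀ n, (FormalMultilinearSeries.ofScalars ℂ c).coeff n = c n := by
      intro n
      simp only [FormalMultilinearSeries.coeff, FormalMultilinearSeries.ofScalars,
        ContinuousMultilinearMap.smul_apply, ContinuousMultilinearMap.mkPiAlgebraFin_apply,
        smul_eq_mul]
      rw [show (1 : Fin n → ℂ) = fun _ => (1 : ℂ) from rfl, List.ofFn_const,
        List.prod_replicate, one_pow, mul_one]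
    simpa [FormalMultilinearSeries.ofScalars_apply_eq, smul_eq_mul, hco, mul_comm] using this
  refine ⟨⟨part1a, part1b⟩, part2, ⟨part3a, part3b⟩, ?_⟩
  refine ⟨Metric.ball (0:ℂ) 1 \ {(1/2 : ℂ), -(1/2 : ℂ)}, ?_, ?_, ⟨Complex.I / 2, ?_, ?_⟩, ?_⟩
  · exact isOpen_ball.sdiff (Set.toFinite _).isClosed
  · intro y hy
    rw [mem_ball_zero_iff] at hy
    refine ⟨mem_ball_zero_iff.2 (by linarith), ?_⟩
    intro hmem
    rcases hmem with h | h
    · rw [h] at hy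
      rw [show ‖(1/2 : ℂ)‖ = 1/2 by simp] at hy
      linarith
    · rw [Set.mem_singleton_iff] at h
      rw [h] at hy
      rw [show ‖-(1/2 : ℂ)‖ = 1/2 by simp] at hy
      linarith
  · constructor
    · rw [mem_ball_zero_iff]
      rw [show ‖Complex.I / 2‖ = 1/2 by simp]
      norm_num
    · intro hmem
      rcases hmem with h | h
      · apply_fun Complex.im at h
        simp at h
      · rw [Set.mem_singleton_iff] at h
        apply_fun Complex.im at h
        simp at h
  · rw [show ‖Complex.I / 2‖ = 1/2 by simp]
  · refine ⟨fun x => 2 / (1 - 4 * x ^ 2) + 1 / (1 - x ^ 2)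
      + ∑' m : ℕ, (f (2 * m + 1) : ℂ) * x ^ (2 * m + 1), ?_, ?_⟩
    · intro x hx
      obtain ⟨hx1, hx2⟩ := hx
      rw [mem_ball_zero_iff] at hx1
      have hne1 : (1:ℂ) - 4 * x ^ 2 ≠ 0 := by
        intro h
        have hfac : (2 * x - 1) * (2 * x + 1) = 0 := by linear_combination -h
        rcases mul_eq_zero.1 hfac with h' | h'
        · exact hx2 (Or.inl (by linear_combination h' / 2))
        · exact hx2 (Or.inr (Set.mem_singleton_iff.2 (by linear_combination h' / 2)))
      have hne2 : (1:ℂ) - x ^ 2 ≠ 0 := by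
        intro h
        have : x ^ 2 = 1 := by linear_combination -h
        have hn := congrArg norm this
        rw [norm_pow, norm_one] at hn
        nlinarith [norm_nonneg x]
      have A1 : AnalyticAt ℂ (fun x : ℂ => 2 / (1 - 4 * x ^ 2)) x :=
        analyticAt_const.div
          (analyticAt_const.sub (analyticAt_const.mul ((analyticAt_id).pow 2))) hne1
      have A2 : AnalyticAt ℂ (fun x : ℂ => 1 / (1 - x ^ 2)) x :=
        analyticAt_const.div (analyticAt_const.sub ((analyticAt_id).pow 2)) hne2
      have A3 : AnalyticAt ℂ
          (fun z : ℂ => ∑' m : ℕ, (f (2 * m + 1) : ℂ) * z ^ (2 * m + 1)) x := by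
        apply hg.analyticOnNhd
        rw [mem_emetric_ball_zero_iff, enorm_eq_nnnorm]
        exact_mod_cast hx1
      exact (A1.add A2).add A3
    · intro x hx
      rw [mem_ball_zero_iff] at hx
      exact (part2 x hx).symm
end
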